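/- arXiv:2307.01506 — 16 statements merged into one kernel-verified Lean document; each statement's English description precedes it below -/
import Mathlib

section
/- Let I be an ideal on ℕ. Then the following are equivalent: (1) for every sequence (a_n) of positive reals with ∑ a_n < ∞, the sequence (n·a_n) I-converges to 0; (2) the summable ideal I_{1/n} = {A ⊆ ℕ : ∑_{n∈A} 1/n < ∞} is contained in I. -/
open Filter Set

/-- Šalát–Toma theorem: for an ideal `I` on `ℕ`, every convergent series of positive
reals has `(n * a n)` `I`-convergent to `0` iff `I` extends the summable ideal
`I_{1/n}`. -/
theorem salat_toma (I : Set (Set ℕ))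
    (hfin : ∀ A : Set ℕ, A.Finite → A ∈ I)
    (hsub : ∀ A B : Set ℕ, A ⊆ B → B ∈ I → A ∈ I)
    (hunion : ∀ A B : Set ℕ, A ∈ I → B ∈ I → A ∪ B ∈ I)
    (huniv : (Set.univ : Set ℕ) ∉ I) :
    (∀ a : ℕ → ℝ, (∀ n, 0 < a n) → Summable a →
      ∀ ε > (0 : ℝ), {n : ℕ | ε ≤ |(n : ℝ) * a n|} ∈ I) ↔
    (∀ A : Set ℕ, Summable (A.indicator fun n : ℕ => 1 / (n : ℝ)) → A ∈ I) := by
  constructor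
  · intro h A hA
    set a : ℕ → ℝ := fun n => A.indicator (fun n : ℕ => 1 / (n : ℝ)) n + (1/2)^n with ha
    have hpos : ∀ n, 0 < a n := by
      intro n
      have h1 : (0:ℝ) ≤ A.indicator (fun n : ℕ => 1 / (n : ℝ)) n :=
        Set.indicator_nonneg (fun m _ => by positivity) n
      have h2 : (0:ℝ) < (1/2)^n := by positivity
      simpa [ha] using add_pos_of_nonneg_of_pos h1 h2
    have hsum : Summable a :=
      hA.add (summable_geometric_of_lt_one (by norm_num) (by norm_num))
    have hI := h a hpos hsum 1 one_pos
    have hsubset : A ⊆ {n : ℕ | 1 ≤ |(n : ℝ) * a n|} ∪ {0} := by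
      intro n hn
      rcases Nat.eq_zero_or_pos n with h0 | h0
      · exact Or.inr h0
      · left
        have hind : A.indicator (fun n : ℕ => 1 / (n : ℝ)) n = 1 / n :=
          Set.indicator_of_mem hn _
        have hn0 : (0:ℝ) < n := by exact_mod_cast h0
        have : (n : ℝ) * a n = 1 + n * (1/2)^n := by
          simp only [ha, hind]
          field_simp
        have hge : (1:ℝ) ≤ (n:ℝ) * a n := by
          rw [this]
          have : (0:ℝ) ≤ (n:ℝ) * (1/2)^n := by positivity
          linarith
        simp only [Set.mem_setOf_eq]
        rw [abs_of_nonneg (by linarith)]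
        exact hge
    exact hsub _ _ hsubset (hunion _ _ hI (hfin _ (Set.finite_singleton 0)))
  · intro h a hpos hsum ε hε
    apply h
    refine (hsum.div_const ε).of_nonneg_of_le
      (fun n => Set.indicator_nonneg (fun m _ => by positivity) n) ?_
    · intro n
      by_cases hn : n ∈ {n : ℕ | ε ≤ |(n : ℝ) * a n|}
      · rw [Set.indicator_of_mem hn]
        have hn0 : n ≠ 0 := by
          rintro rfl
          simp only [Set.mem_setOf_eq, Nat.cast_zero, zero_mul, abs_zero] at hn
          linarith
        have hnp : (0:ℝ) < n := by
          exact_mod_cast Nat.pos_of_ne_zero hn0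
        have hε' : ε ≤ (n:ℝ) * a n := by
          have := hn
          simp only [Set.mem_setOf_eq] at this
          rwa [abs_of_nonneg (le_of_lt (mul_pos hnp (hpos n)))] at this
        rw [div_le_div_iff₀ hnp hε]
        linarith
      · rw [Set.indicator_of_notMem hn]
        exact div_nonneg (hpos n).le hε.le
end

section
/- Let I be an ideal on ℕ. Then the following are equivalent: (1) for every sequence (a_n) of nonnegative reals with ∑ a_n < ∞, there exists F in the dual filter I* such that (n·a_n)_{n∈F} converges to 0; (2) the summable ideal I_{1/n} is contained in I. -/
/-!
If `A ∈ I_{1/n}`, the sequence `a = 1_A · (1/n)` is summable and `n a_n = 1` on `A \ {0}`, so any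
`F ∈ I*` along which `n a_n → 0` meets `A` in a finite set; hence `A ∈ I`.

Conversely, for summable `a ≥ 0` each level set `A_k = {n | n a_n ≥ 1/(k+1)}` lies in `I_{1/n}`,
because `1/n ≤ (k+1) a_n` on it. The summable ideal is a P-ideal: cutting off suitably far tails
`A_k ∩ [N_k, ∞)`, whose reciprocal sums are summable in `k`, their union `B` is still in
`I_{1/n} ⊆ I`, and off `B` we have `n a_n < 1/(k+1)` for `n ≥ N_k`.
-/

open Filter Set

open scoped ENNReal

theorem summable_iff_tsum_ofReal_ne_top {α : Type*} {f : α → ℝ} (hf : ∀ x, 0 ≤ f x) :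
    Summable f ↔ ∑' x, ENNReal.ofReal (f x) ≠ ∞ := by
  refine ⟨Summable.tsum_ofReal_ne_top, fun h => ?_⟩
  simpa only [ENNReal.toReal_ofReal (hf _)] using ENNReal.summable_toReal h

namespace ENNReal

theorem exists_tsum_inter_Ici_lt {f : ℕ → ℝ≥0∞} {s : Set ℕ} (hs : ∑' n : s, f n ≠ ∞)
    {ε : ℝ≥0∞} (hε : 0 < ε) : ∃ N, ∑' n : ↑(s ∩ Ici N), f n < ε := by
  set g := s.indicator f
  have hg : ∑' n, g n ≠ ∞ := by rwa [← tsum_subtype]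
  obtain ⟨N, hN⟩ := ((tendsto_sum_nat_add g hg).eventually (gt_mem_nhds hε)).exists
  have hinj : Function.Injective fun n : ↑(s ∩ Ici N) => (n : ℕ) - N := fun m n hmn =>
    Subtype.ext <| by have := m.2.2; have := n.2.2; simp only [mem_Ici] at *; omega
  refine ⟨N, lt_of_le_of_lt ?_ hN⟩
  calc ∑' n : ↑(s ∩ Ici N), f n = ∑' n : ↑(s ∩ Ici N), g ((n - N) + N) :=
        tsum_congr fun n => by
          rw [Nat.sub_add_cancel n.2.2]; exact (indicator_of_mem n.2.1 f).symm
    _ ≤ ∑' i, g (i + N) := tsum_comp_le_tsum_of_injective hinj fun i => g (i + N)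

theorem exists_tsum_iUnion_inter_Ici_ne_top {f : ℕ → ℝ≥0∞} {s : ℕ → Set ℕ}
    (hs : ∀ k, ∑' n : s k, f n ≠ ∞) : ∃ N : ℕ → ℕ, ∑' n : ⋃ k, s k ∩ Ici (N k), f n ≠ ∞ := by
  obtain ⟨δ, hδ, hδsum⟩ := exists_pos_sum_of_countable one_ne_zero ℕ
  choose N hN using fun k => exists_tsum_inter_Ici_lt (hs k) (coe_pos.2 (hδ k))
  refine ⟨N, ne_top_of_le_ne_top (hδsum.trans one_lt_top).ne ?_⟩
  exact (tsum_iUnion_le_tsum f _).trans (ENNReal.tsum_le_tsum fun k => (hN k).le)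

end ENNReal

theorem exists_summable_indicator_iUnion_inter_Ici {f : ℕ → ℝ} (hf : ∀ n, 0 ≤ f n)
    {s : ℕ → Set ℕ} (hs : ∀ k, Summable ((s k).indicator f)) :
    ∃ N : ℕ → ℕ, Summable ((⋃ k, s k ∩ Ici (N k)).indicator f) := by
  have hs' (k : ℕ) : ∑' n : s k, ENNReal.ofReal (f n) ≠ ∞ :=
    (summable_subtype_iff_indicator.2 (hs k)).tsum_ofReal_ne_top
  obtain ⟨N, hN⟩ :=
    ENNReal.exists_tsum_iUnion_inter_Ici_ne_top (f := (ENNReal.ofReal <| f ·)) hs'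
  refine ⟨N, summable_subtype_iff_indicator.1 ?_⟩
  exact (summable_iff_tsum_ofReal_ne_top (f := f ∘ Subtype.val) fun n => hf n.1).2 hN

theorem Summable.exists_summable_indicator_one_div_forall_notMem_mul_lt {a : ℕ → ℝ}
    (hs : Summable a) (ha : ∀ n, 0 ≤ a n) :
    ∃ B : Set ℕ, Summable (B.indicator fun n : ℕ => 1 / (n : ℝ)) ∧
      ∀ ε > 0, ∃ k : ℕ, ∀ n ∉ B, k ≤ n → (n : ℝ) * a n < ε := by
  set A : ℕ → Set ℕ := fun k => {n | 1 / ((k : ℝ) + 1) ≤ n * a n}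
  have hA (k : ℕ) : Summable ((A k).indicator fun n : ℕ => 1 / (n : ℝ)) := by
    refine (hs.mul_left ((k : ℝ) + 1)).of_nonneg_of_le
      (fun n => indicator_nonneg (fun n _ => by positivity) n) fun n => ?_
    by_cases hn : n ∈ A k
    · have hk : (0 : ℝ) < k + 1 := by positivity
      have hn' : 1 ≤ ((k : ℝ) + 1) * (n * a n) := (div_le_iff₀' hk).1 hn
      have hpos : (0 : ℝ) < n := by
        rcases Nat.eq_zero_or_pos n with rfl | h
        · norm_num at hn'
        · exact_mod_cast h
      rw [indicator_of_mem hn, div_le_iff₀ hpos]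
      linarith
    · rw [indicator_of_notMem hn]
      exact mul_nonneg (by positivity) (ha n)
  obtain ⟨N, hN⟩ := exists_summable_indicator_iUnion_inter_Ici (fun n => by positivity) hA
  refine ⟨_, hN, fun ε hε => ?_⟩
  obtain ⟨k, hk⟩ := exists_nat_one_div_lt hε
  refine ⟨N k, fun n hn hkn => ?_⟩
  have hnA : n ∉ A k := fun hnA => hn (mem_iUnion.2 ⟨k, hnA, hkn⟩)
  simp only [A, mem_ofPred_eq, not_le] at hnA
  linarith

theorem salat_toma_star_general (I : Set (Set ℕ))
    (hfin : ∀ A : Set ℕ, A.Finite → A ∈ I)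
    (hsub : ∀ A B : Set ℕ, A ⊆ B → B ∈ I → A ∈ I)
    (hunion : ∀ A B : Set ℕ, A ∈ I → B ∈ I → A ∪ B ∈ I) :
    (∀ a : ℕ → ℝ, (∀ n, 0 ≤ a n) → Summable a →
      ∃ F : Set ℕ, Fᶜ ∈ I ∧
        ∀ ε > (0 : ℝ), ∃ k : ℕ, ∀ n ∈ F, k ≤ n → |(n : ℝ) * a n| < ε) ↔
    (∀ A : Set ℕ, Summable (A.indicator fun n : ℕ => 1 / (n : ℝ)) → A ∈ I) := by
  constructor
  · intro h A hA
    obtain ⟨F, hFc, hconv⟩ := h _ (indicator_nonneg fun n _ => by positivity) hA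
    obtain ⟨k, hk⟩ := hconv 1 one_pos
    refine hsub _ _ (fun n hnA => ?_) (hunion _ _ hFc (hfin _ (finite_Iio (max k 1))))
    by_contra hn
    simp only [mem_union, mem_compl_iff, mem_Iio, not_or, not_not, not_lt, max_le_iff] at hn
    have hn0 : (n : ℝ) ≠ 0 := Nat.cast_ne_zero.2 (by omega)
    simpa [indicator_of_mem hnA, hn0] using hk n hn.1 hn.2.1
  · intro h a ha hs
    obtain ⟨B, hB, hlt⟩ := hs.exists_summable_indicator_one_div_forall_notMem_mul_lt ha
    refine ⟨Bᶜ, by rw [compl_compl]; exact h B hB, fun ε hε => ?_⟩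
    obtain ⟨k, hk⟩ := hlt ε hε
    refine ⟨k, fun n hn hkn => ?_⟩
    rw [abs_of_nonneg (mul_nonneg n.cast_nonneg (ha n))]
    exact hk n hn hkn

/-- For an ideal `I` on `ℕ`: every convergent series of nonnegative reals has
`(n * a n)` `I^*`-convergent to `0` iff `I` extends the summable ideal `I_{1/n}`. -/
theorem salat_toma_star (I : Set (Set ℕ))
    (hfin : ∀ A : Set ℕ, A.Finite → A ∈ I)
    (hsub : ∀ A B : Set ℕ, A ⊆ B → B ∈ I → A ∈ I)
    (hunion : ∀ A B : Set ℕ, A ∈ I → B ∈ I → A ∪ B ∈ I)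
    (huniv : (Set.univ : Set ℕ) ∉ I) :
    (∀ a : ℕ → ℝ, (∀ n, 0 ≤ a n) → Summable a →
      ∃ F : Set ℕ, Fᶜ ∈ I ∧
        ∀ ε > (0 : ℝ), ∃ k : ℕ, ∀ n ∈ F, k ≤ n → |(n : ℝ) * a n| < ε) ↔
    (∀ A : Set ℕ, Summable (A.indicator fun n : ℕ => 1 / (n : ℝ)) → A ∈ I) :=
  salat_toma_star_general I hfin hsub hunion
end

section
/- Let I be an ideal on ℕ, g:(0,∞)→(0,∞) strictly increasing with lim_{x→0+} g(x)/x^γ = M for some positive constants γ, M, and let (b_n), (c_n) be sequences of positive reals with c_n → ∞. Then the following are equivalent: (1) for every sequence (a_n) with values in the range of g, ∑ b_n a_n < ∞ implies that c_n·g^{-1}(a_n) I-converges to 0; (2) the summable ideal generated by the sequence (b_n·g(1/c_n)), namely {A ⊆ ℕ : ∑_{n∈A} b_n g(1/c_n) < ∞}, is contained in I. -/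
open Filter Set

/-- Theorem (general I-test, power-like `g`): for an ideal `I`, a strictly increasing
`g : (0,∞) → (0,∞)` with `g(x)/x^γ → M > 0` as `x → 0⁺`, positive sequences `(b n)`,
`(c n)` with `c n → ∞`, the following are equivalent:
(1) for every sequence with values in the range of `g` (written as `g (t n)` with
`t n > 0`, so that `t n = g⁻¹(a n)`), convergence of `∑ b n * g (t n)` implies
`I`-convergence of `(c n * t n)` to `0`;
(2) the summable ideal generated by `(b n * g (1 / c n))` is contained in `I`. -/
theorem general_test_one (I : Set (Set ℕ))
    (hfin : ∀ A : Set ℕ, A.Finite → A ∈ I)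
    (hsub : ∀ A B : Set ℕ, A ⊆ B → B ∈ I → A ∈ I)
    (hunion : ∀ A B : Set ℕ, A ∈ I → B ∈ I → A ∪ B ∈ I)
    (huniv : (Set.univ : Set ℕ) ∉ I)
    (g : ℝ → ℝ) (hgpos : ∀ x > (0 : ℝ), 0 < g x) (hgmono : StrictMonoOn g (Set.Ioi 0))
    (γ M : ℝ) (hγ : 0 < γ) (hM : 0 < M)
    (hglim : Tendsto (fun x => g x / x ^ γ) (nhdsWithin 0 (Set.Ioi 0)) (nhds M))
    (b c : ℕ → ℝ) (hb : ∀ n, 0 < b n) (hc : ∀ n, 0 < c n)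
    (hclim : Tendsto c atTop atTop) :
    (∀ t : ℕ → ℝ, (∀ n, 0 < t n) → Summable (fun n => b n * g (t n)) →
      ∀ ε > (0 : ℝ), {n : ℕ | ε ≤ |c n * t n|} ∈ I) ↔
    (∀ A : Set ℕ, Summable (A.indicator fun n : ℕ => b n * g (1 / c n)) → A ∈ I) := by
  classical
  -- `x ^ γ → 0` as `x → 0⁺`
  have hrpow : Tendsto (fun x : ℝ => x ^ γ) (nhdsWithin 0 (Set.Ioi 0)) (nhds 0) := by
    have h := (Real.continuousAt_rpow_const 0 γ (Or.inr hγ.le)).tendsto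
    rw [Real.zero_rpow hγ.ne'] at h
    exact h.mono_left nhdsWithin_le_nhds
  -- `g → 0` as `x → 0⁺`
  have hg0 : Tendsto g (nhdsWithin 0 (Set.Ioi 0)) (nhds 0) := by
    have h := hglim.mul hrpow
    rw [mul_zero] at h
    refine h.congr' ?_
    filter_upwards [self_mem_nhdsWithin] with x hx
    have hxγ : x ^ γ ≠ 0 := (Real.rpow_pos_of_pos hx γ).ne'
    field_simp
  constructor
  · -- (1) → (2)
    intro h1 A hA
    have hsmall : ∀ n : ℕ, ∃ x : ℝ, 0 < x ∧ g x ≤ (1 / 2 : ℝ) ^ n / b n := by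
      intro n
      have hδ : (0 : ℝ) < (1 / 2 : ℝ) ^ n / b n := div_pos (by positivity) (hb n)
      have h := (hg0.eventually (eventually_le_nhds hδ)).and self_mem_nhdsWithin
      obtain ⟨x, hx1, hx2⟩ := h.exists
      exact ⟨x, hx2, hx1⟩
    set t : ℕ → ℝ := fun n => if n ∈ A then 1 / c n else Classical.choose (hsmall n) with ht_def
    have ht : ∀ n, 0 < t n := by
      intro n
      by_cases hn : n ∈ A
      · simp only [ht_def, if_pos hn]
        exact div_pos one_pos (hc n)
      · simp only [ht_def, if_neg hn]
        exact (Classical.choose_spec (hsmall n)).1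
    have hsum : Summable (fun n => b n * g (t n)) := by
      refine Summable.of_nonneg_of_le (fun n => ?_) (fun n => ?_)
        (hA.add (summable_geometric_of_lt_one (by norm_num) (by norm_num : (1/2:ℝ) < 1)))
      · exact le_of_lt (mul_pos (hb n) (hgpos _ (ht n)))
      · by_cases hn : n ∈ A
        · simp only [ht_def, if_pos hn, Set.indicator_of_mem hn]
          have : (0:ℝ) ≤ (1/2:ℝ) ^ n := by positivity
          linarith
        · simp only [ht_def, if_neg hn, Set.indicator_of_notMem hn]
          have h2 := (Classical.choose_spec (hsmall n)).2
          have hbn := hb n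
          have : b n * g (Classical.choose (hsmall n)) ≤ (1/2:ℝ) ^ n := by
            rw [mul_comm]
            calc g (Classical.choose (hsmall n)) * b n ≤ ((1/2:ℝ)^n / b n) * b n :=
                  mul_le_mul_of_nonneg_right h2 hbn.le
              _ = (1/2:ℝ)^n := by field_simp
          linarith
    have hmem := h1 t ht hsum 1 one_pos
    refine hsub A _ (fun n hn => ?_) hmem
    simp only [Set.mem_setOf_eq, ht_def, if_pos hn]
    have : c n * (1 / c n) = 1 := by rw [mul_one_div, div_self (hc n).ne']
    rw [this]
    simp
  · -- (2) → (1)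
    intro h2 t ht hsum ε hε
    set f : ℕ → ℝ := fun n => b n * g (1 / c n) with hf_def
    -- sequences `a / c n` tend to 0 within `Ioi 0`
    have key : ∀ a : ℝ, 0 < a →
        Tendsto (fun n => a / c n) atTop (nhdsWithin 0 (Set.Ioi 0)) := by
      intro a ha
      rw [tendsto_nhdsWithin_iff]
      constructor
      · have h := hclim.inv_tendsto_atTop
        have := h.const_mul a
        rw [mul_zero] at this
        refine this.congr fun n => ?_
        simp [div_eq_mul_inv]
      · exact Eventually.of_forall fun n => div_pos ha (hc n)
    have e1 : ∀ᶠ n in atTop, g (1 / c n) / (1 / c n) ^ γ < 2 * M :=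
      (key 1 one_pos).eventually (hglim.eventually_lt_const (by linarith))
    have e2 : ∀ᶠ n in atTop, M / 2 < g (ε / c n) / (ε / c n) ^ γ :=
      (key ε hε).eventually (hglim.eventually_const_lt (by linarith))
    obtain ⟨N, hN⟩ := (e1.and e2).exists_forall_of_atTop
    set A := {n : ℕ | ε ≤ |c n * t n|} with hA_def
    have hεγ : (0:ℝ) < ε ^ γ := Real.rpow_pos_of_pos hε γ
    set C : ℝ := 4 / ε ^ γ with hC_def
    have hC : 0 < C := by positivity
    -- pointwise bound for n ≥ N
    have hbound : ∀ m, N ≤ m → A.indicator f m ≤ C * (b m * g (t m)) := by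
      intro m hm
      by_cases hmA : m ∈ A
      · rw [Set.indicator_of_mem hmA]
        have hcm := hc m
        have htm := ht m
        have hεc : 0 < ε / c m := div_pos hε hcm
        have h1c : 0 < 1 / c m := by positivity
        have habs : |c m * t m| = c m * t m := abs_of_pos (mul_pos hcm htm)
        have hle : ε / c m ≤ t m := by
          rw [div_le_iff₀ hcm]
          have := hmA
          rw [hA_def, Set.mem_setOf_eq, habs] at this
          linarith [this]
        have hg_le : g (ε / c m) ≤ g (t m) :=
          hgmono.monotoneOn hεc htm hle
        obtain ⟨hm1, hm2⟩ := hN m hm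
        have hP : (0:ℝ) < (1 / c m) ^ γ := Real.rpow_pos_of_pos h1c γ
        have hQP : (ε / c m) ^ γ = ε ^ γ * (1 / c m) ^ γ := by
          rw [div_eq_mul_inv, ← one_div, Real.mul_rpow hε.le h1c.le]
        have hm1' : g (1 / c m) < 2 * M * (1 / c m) ^ γ := by
          rw [div_lt_iff₀ hP] at hm1; linarith
        have hm2' : M / 2 * (ε ^ γ * (1 / c m) ^ γ) < g (ε / c m) := by
          rw [lt_div_iff₀ (by rw [hQP] at *; positivity)] at hm2
          rw [hQP] at hm2; linarith
        have hchain : g (1 / c m) ≤ C * g (t m) := by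
          have h3 : C * (M / 2 * (ε ^ γ * (1 / c m) ^ γ)) = 2 * M * (1 / c m) ^ γ := by
            rw [hC_def]; field_simp; ring
          have h4 : C * (M / 2 * (ε ^ γ * (1 / c m) ^ γ)) ≤ C * g (t m) := by
            apply mul_le_mul_of_nonneg_left _ hC.le
            linarith
          linarith
        calc b m * g (1 / c m) ≤ b m * (C * g (t m)) :=
              mul_le_mul_of_nonneg_left hchain (hb m).le
          _ = C * (b m * g (t m)) := by ring
      · rw [Set.indicator_of_notMem hmA]
        have := mul_pos (hb m) (hgpos _ (ht m))
        positivity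
    -- summability of the indicator
    have hsummA : Summable (A.indicator f) := by
      rw [← summable_nat_add_iff N]
      refine Summable.of_nonneg_of_le (fun n => ?_) (fun n => hbound (n + N) (by omega)) ?_
      · by_cases h : n + N ∈ A
        · rw [Set.indicator_of_mem h]
          exact le_of_lt (mul_pos (hb _) (hgpos _ (div_pos one_pos (hc _))))
        · rw [Set.indicator_of_notMem h]
      · exact (summable_nat_add_iff N).2 (hsum.mul_left C)
    exact h2 A hsummA
end

section
/- Let I be an ideal on ℕ, g:(0,∞)→(0,∞) strictly increasing with lim_{x→0+} g(x) = 0 and such that for every ε>0 there exists M with g(x)/g(εx) ≤ M for all x>0, and let (b_n), (c_n) be sequences of positive reals. Then the following are equivalent: (1) for every sequence (a_n) with values in the range of g, ∑ b_n a_n < ∞ implies that c_n·g^{-1}(a_n) I-converges to 0; (2) the summable ideal generated by (b_n·g(1/c_n)) is contained in I. -/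
open Filter Set Topology

/-!
(1) ⇒ (2): given `A` with `∑_{n ∈ A} b n g(1/c n) < ∞`, put `t n = 1/c n` on `A` and take `t n`
so small off `A` that `b n g(t n) ≤ 2⁻ⁿ`; then `∑ b n g(t n) < ∞`, so `{n | 1 ≤ c n t n} ⊇ A` is in `I`.

(2) ⇒ (1): on `A = {n | ε ≤ c n t n}` monotonicity and the doubling bound give
`g(1/c n) ≤ M g(ε/c n) ≤ M g(t n)`, so `∑_{n ∈ A} b n g(1/c n) ≤ M ∑ b n g(t n) < ∞` and `A ∈ I`.
-/

section

variable {g : ℝ → ℝ}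

lemma exists_pos_abs_mul_lt (hglim : Tendsto g (𝓝[>] 0) (𝓝 0)) (b : ℝ) {δ : ℝ} (hδ : 0 < δ) :
    ∃ x > 0, |b * g x| < δ := by
  have hlim : Tendsto (fun x => b * g x) (𝓝[>] 0) (𝓝 0) := by
    simpa using hglim.const_mul b
  obtain ⟨x, hx, hxpos⟩ :=
    ((hlim.eventually (Metric.ball_mem_nhds 0 hδ)).and self_mem_nhdsWithin).exists
  exact ⟨x, hxpos, by simpa using hx⟩

lemma exists_pos_summable_mul (hglim : Tendsto g (𝓝[>] 0) (𝓝 0)) (b : ℕ → ℝ) :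
    ∃ s : ℕ → ℝ, (∀ n, 0 < s n) ∧ Summable fun n => b n * g (s n) := by
  choose s hs hlt using fun n => exists_pos_abs_mul_lt hglim (b n) (pow_pos one_half_pos n)
  exact ⟨s, hs, summable_geometric_two.of_norm_bounded fun n => (hlt n).le⟩

lemma apply_one_div_le_mul_of_le_mul (hgpos : ∀ x > 0, 0 < g x) (hgmono : MonotoneOn g (Ioi 0))
    {ε M c t : ℝ} (hε : 0 < ε) (hM : ∀ x > 0, g x / g (ε * x) ≤ M) (hc : 0 < c)
    (ht : ε ≤ c * t) : g (1 / c) ≤ M * g t := by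
  have hεc : 0 < ε * (1 / c) := by positivity
  have hεt : ε * (1 / c) ≤ t := by
    rw [mul_one_div, div_le_iff₀' hc]
    exact ht
  have hratio := hM (1 / c) (by positivity)
  have hM0 : 0 ≤ M := (div_pos (hgpos _ (by positivity)) (hgpos _ hεc)).le.trans hratio
  calc g (1 / c) ≤ M * g (ε * (1 / c)) := (div_le_iff₀ (hgpos _ hεc)).mp hratio
    _ ≤ M * g t := by
      gcongr
      exact hgmono hεc (hεc.trans_le hεt) hεt

end

lemma summable_indicator_of_le_mul {A : Set ℕ} {f g : ℕ → ℝ} (M : ℝ) (hf : ∀ n ∈ A, 0 ≤ f n)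
    (hfg : ∀ n ∈ A, f n ≤ M * g n) (hg : Summable g) : Summable (A.indicator f) :=
  ((hg.mul_left M).indicator A).of_nonneg_of_le
    (fun n => indicator_nonneg hf n) (fun n => indicator_le_indicator' (hfg n))

lemma summable_piecewise {A : Set ℕ} [DecidablePred (· ∈ A)] {f g : ℕ → ℝ}
    (hf : Summable (A.indicator f)) (hg : Summable g) : Summable (A.piecewise f g) := by
  rw [← indicator_add_compl_eq_piecewise]
  exact hf.add (hg.indicator _)

theorem general_test_two_general (I : Set (Set ℕ))
    (hsub : ∀ A B : Set ℕ, A ⊆ B → B ∈ I → A ∈ I)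
    (g : ℝ → ℝ) (hgpos : ∀ x > (0 : ℝ), 0 < g x) (hgmono : StrictMonoOn g (Set.Ioi 0))
    (hglim : Tendsto g (nhdsWithin 0 (Set.Ioi 0)) (nhds 0))
    (hgdoubling : ∀ ε > (0 : ℝ), ∃ M : ℝ, ∀ x > (0 : ℝ), g x / g (ε * x) ≤ M)
    (b c : ℕ → ℝ) (hb : ∀ n, 0 < b n) (hc : ∀ n, 0 < c n) :
    (∀ t : ℕ → ℝ, (∀ n, 0 < t n) → Summable (fun n => b n * g (t n)) →
      ∀ ε > (0 : ℝ), {n : ℕ | ε ≤ |c n * t n|} ∈ I) ↔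
    (∀ A : Set ℕ, Summable (A.indicator fun n : ℕ => b n * g (1 / c n)) → A ∈ I) := by
  classical
  constructor
  · intro h A hA
    obtain ⟨s, hs, hsum⟩ := exists_pos_summable_mul hglim b
    let t := A.piecewise (fun n => 1 / c n) s
    have ht : ∀ n, 0 < t n := fun n => by
      by_cases hn : n ∈ A <;> simp [t, hn, hc n, hs n]
    have htsum : Summable fun n => b n * g (t n) := by
      convert summable_piecewise hA hsum using 2 with n
      by_cases hn : n ∈ A <;> simp [t, hn]
    refine hsub A _ (fun n hn => ?_) (h t ht htsum 1 one_pos)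
    simp [t, hn, (hc n).ne']
  · intro h t ht hsum ε hε
    obtain ⟨M, hM⟩ := hgdoubling ε hε
    refine h _ (summable_indicator_of_le_mul M (fun n _ => (mul_pos (hb n) (hgpos _ ?_)).le)
      (fun n hn => ?_) hsum)
    · exact one_div_pos.mpr (hc n)
    · rw [mem_ofPred_eq, abs_of_pos (mul_pos (hc n) (ht n))] at hn
      rw [mul_left_comm]
      exact mul_le_mul_of_nonneg_left
        (apply_one_div_le_mul_of_le_mul hgpos hgmono.monotoneOn hε hM (hc n) hn) (hb n).le

/-- Theorem (general I-test, doubling-like `g`): for an ideal `I`, a strictly increasing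
`g : (0,∞) → (0,∞)` with `g(x) → 0` as `x → 0⁺` and such that for every `ε > 0` there is
`M` with `g(x)/g(εx) ≤ M` for all `x > 0`, and positive sequences `(b n)`, `(c n)`,
the following are equivalent:
(1) for every sequence with values in the range of `g` (written as `g (t n)` with
`t n > 0`, so that `t n = g⁻¹(a n)`), convergence of `∑ b n * g (t n)` implies
`I`-convergence of `(c n * t n)` to `0`;
(2) the summable ideal generated by `(b n * g (1 / c n))` is contained in `I`. -/
theorem general_test_two (I : Set (Set ℕ))
    (hfin : ∀ A : Set ℕ, A.Finite → A ∈ I)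
    (hsub : ∀ A B : Set ℕ, A ⊆ B → B ∈ I → A ∈ I)
    (hunion : ∀ A B : Set ℕ, A ∈ I → B ∈ I → A ∪ B ∈ I)
    (huniv : (Set.univ : Set ℕ) ∉ I)
    (g : ℝ → ℝ) (hgpos : ∀ x > (0 : ℝ), 0 < g x) (hgmono : StrictMonoOn g (Set.Ioi 0))
    (hglim : Tendsto g (nhdsWithin 0 (Set.Ioi 0)) (nhds 0))
    (hgdoubling : ∀ ε > (0 : ℝ), ∃ M : ℝ, ∀ x > (0 : ℝ), g x / g (ε * x) ≤ M)
    (b c : ℕ → ℝ) (hb : ∀ n, 0 < b n) (hc : ∀ n, 0 < c n) :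
    (∀ t : ℕ → ℝ, (∀ n, 0 < t n) → Summable (fun n => b n * g (t n)) →
      ∀ ε > (0 : ℝ), {n : ℕ | ε ≤ |c n * t n|} ∈ I) ↔
    (∀ A : Set ℕ, Summable (A.indicator fun n : ℕ => b n * g (1 / c n)) → A ∈ I) :=
  general_test_two_general I hsub g hgpos hgmono hglim hgdoubling b c hb hc
end

section
/- Let I be an ideal on ℕ, p, q positive reals, and α, β nonnegative reals. Then the following are equivalent: (1) for every sequence (d_n) of positive reals, ∑ n^α d_n^p < ∞ implies that (n^β d_n^q) I-converges to 0; (2) the summable ideal generated by the sequence (n^{α − βp/q}) is contained in I. -/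
open Filter Set

/-!
If `ε ≤ n^β d_n^q` then, raising to the power `p/q`, `n^(α - βp/q) ≤ ε^(-p/q) n^α d_n^p`; so the
level sets of `(n^β d_n^q)` lie in the summable ideal of `n^(α - βp/q)` whenever `∑ n^α d_n^p < ∞`.
Conversely, for a set `A` in that summable ideal, the sequence with `d_n = n^(-β/q)` on `A` and
`n^α d_n^p = 2^(-n)` off `A` has `∑ n^α d_n^p < ∞` and `n^β d_n^q = 1` on `A`, so `A` is contained,
up to the point `0`, in a level set of `(n^β d_n^q)`.
-/

section LevelSets

variable {p q α β : ℝ}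

lemma rpow_sub_le_of_le_rpow_mul_rpow {x d ε : ℝ} (hp : 0 ≤ p) (hq : 0 < q) (hx : 0 < x)
    (hd : 0 ≤ d) (hε : 0 < ε) (h : ε ≤ x ^ β * d ^ q) :
    x ^ (α - β * p / q) ≤ ε ^ (-(p / q)) * (x ^ α * d ^ p) := by
  have hpow : ε ^ (p / q) ≤ x ^ (β * (p / q)) * d ^ p := by
    calc ε ^ (p / q) ≤ (x ^ β * d ^ q) ^ (p / q) :=
          Real.rpow_le_rpow hε.le h (div_nonneg hp hq.le)
      _ = x ^ (β * (p / q)) * d ^ p := by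
          rw [Real.mul_rpow (by positivity) (by positivity), ← Real.rpow_mul hx.le,
            ← Real.rpow_mul hd, mul_div_cancel₀ p hq.ne']
  have hεpow : 0 < ε ^ (p / q) := Real.rpow_pos_of_pos hε _
  rw [Real.rpow_neg hε.le, ← div_eq_inv_mul, le_div_iff₀ hεpow]
  calc x ^ (α - β * p / q) * ε ^ (p / q)
      ≤ x ^ (α - β * p / q) * (x ^ (β * (p / q)) * d ^ p) := by gcongr
    _ = x ^ α * d ^ p := by
        rw [← mul_assoc, ← Real.rpow_add hx, mul_div_assoc, sub_add_cancel]

lemma summable_indicator_setOf_le_rpow_mul_rpow (hp : 0 ≤ p) (hq : 0 < q) {d : ℕ → ℝ}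
    (hd : ∀ n, 0 ≤ d n) (hsum : Summable fun n : ℕ => (n : ℝ) ^ α * d n ^ p) {ε : ℝ}
    (hε : 0 < ε) :
    Summable ({n : ℕ | ε ≤ |(n : ℝ) ^ β * d n ^ q|}.indicator
      fun n : ℕ => (n : ℝ) ^ (α - β * p / q)) := by
  refine (hsum.mul_left (ε ^ (-(p / q)))).of_norm_bounded_eventually ?_
  filter_upwards [eventually_cofinite_ne 0] with n hn
  have hn_pos : (0 : ℝ) < n := Nat.cast_pos.mpr (Nat.pos_of_ne_zero hn)
  rw [Real.norm_eq_abs, abs_of_nonneg (indicator_nonneg (fun m _ => by positivity) n)]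
  by_cases hmem : n ∈ {n : ℕ | ε ≤ |(n : ℝ) ^ β * d n ^ q|}
  · rw [indicator_of_mem hmem]
    rw [mem_ofPred_eq, abs_of_nonneg (by have := hd n; positivity)] at hmem
    exact rpow_sub_le_of_le_rpow_mul_rpow hp hq hn_pos (hd n) hε hmem
  · rw [indicator_of_notMem hmem]
    have := hd n
    positivity

end LevelSets

section TestSequence

open scoped Classical

variable (A : Set ℕ) (p q α β : ℝ)

/-- The value at `0` is `1` because `0 ^ r = 0` for `r ≠ 0` would break positivity. -/
noncomputable def testSeq (n : ℕ) : ℝ :=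
  if n = 0 then 1
  else if n ∈ A then (n : ℝ) ^ (-(β / q)) else ((n : ℝ) ^ (-α) * (1 / 2) ^ n) ^ p⁻¹

variable {A p q α β}

lemma testSeq_pos (n : ℕ) : 0 < testSeq A p q α β n := by
  unfold testSeq
  split_ifs <;> positivity

lemma rpow_mul_testSeq_rpow (hp : p ≠ 0) {n : ℕ} (hn : n ≠ 0) :
    (n : ℝ) ^ α * testSeq A p q α β n ^ p =
      A.piecewise (fun n : ℕ => (n : ℝ) ^ (α - β * p / q)) (fun n => (1 / 2) ^ n) n := by
  have hn' : (0 : ℝ) < n := Nat.cast_pos.mpr (Nat.pos_of_ne_zero hn)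
  by_cases hA : n ∈ A
  · simp only [testSeq, if_neg hn, if_pos hA, piecewise_eq_of_mem _ _ _ hA]
    rw [← Real.rpow_mul hn'.le, ← Real.rpow_add hn']
    ring_nf
  · simp only [testSeq, if_neg hn, if_neg hA, piecewise_eq_of_notMem _ _ _ hA]
    rw [← Real.rpow_mul (by positivity), inv_mul_cancel₀ hp, Real.rpow_one, ← mul_assoc,
      ← Real.rpow_add hn', add_neg_cancel, Real.rpow_zero, one_mul]

lemma rpow_mul_testSeq_rpow_of_mem (hq : q ≠ 0) {n : ℕ} (hn : n ≠ 0) (hA : n ∈ A) :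
    (n : ℝ) ^ β * testSeq A p q α β n ^ q = 1 := by
  have hn' : (0 : ℝ) < n := Nat.cast_pos.mpr (Nat.pos_of_ne_zero hn)
  simp only [testSeq, if_neg hn, if_pos hA]
  rw [← Real.rpow_mul hn'.le, ← Real.rpow_add hn', neg_mul, div_mul_cancel₀ β hq,
    add_neg_cancel, Real.rpow_zero]

lemma summable_rpow_mul_testSeq_rpow (hp : p ≠ 0)
    (hA : Summable (A.indicator fun n : ℕ => (n : ℝ) ^ (α - β * p / q))) :
    Summable fun n : ℕ => (n : ℝ) ^ α * testSeq A p q α β n ^ p := by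
  refine (hA.add summable_geometric_two).of_norm_bounded_eventually ?_
  filter_upwards [eventually_cofinite_ne 0] with n hn
  rw [rpow_mul_testSeq_rpow hp hn, Real.norm_eq_abs]
  by_cases hnA : n ∈ A
  · rw [piecewise_eq_of_mem _ _ _ hnA, indicator_of_mem hnA, abs_of_nonneg (by positivity)]
    exact le_add_of_nonneg_right (by positivity)
  · rw [piecewise_eq_of_notMem _ _ _ hnA, indicator_of_notMem hnA, abs_of_nonneg (by positivity),
      zero_add]

lemma diff_zero_subset_setOf_one_le_testSeq (hq : q ≠ 0) :
    A \ {0} ⊆ {n : ℕ | 1 ≤ |(n : ℝ) ^ β * testSeq A p q α β n ^ q|} := fun n ⟨hA, hn⟩ => by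
  rw [mem_ofPred_eq, rpow_mul_testSeq_rpow_of_mem hq hn hA, abs_one]

end TestSequence

theorem misik_toth_general (I : Set (Set ℕ))
    (hfin : ∀ A : Set ℕ, A.Finite → A ∈ I)
    (hsub : ∀ A B : Set ℕ, A ⊆ B → B ∈ I → A ∈ I)
    (hunion : ∀ A B : Set ℕ, A ∈ I → B ∈ I → A ∪ B ∈ I)
    (p q α β : ℝ) (hp : 0 < p) (hq : 0 < q) :
    (∀ d : ℕ → ℝ, (∀ n, 0 < d n) →
      Summable (fun n : ℕ => (n : ℝ) ^ α * d n ^ p) →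
      ∀ ε > (0 : ℝ), {n : ℕ | ε ≤ |(n : ℝ) ^ β * d n ^ q|} ∈ I) ↔
    (∀ A : Set ℕ,
      Summable (A.indicator fun n : ℕ => (n : ℝ) ^ (α - β * p / q)) → A ∈ I) := by
  constructor
  · intro h A hA
    have hlevel := h (testSeq A p q α β) testSeq_pos
      (summable_rpow_mul_testSeq_rpow hp.ne' hA) 1 one_pos
    have hdiff : A \ {0} ∈ I := hsub _ _ (diff_zero_subset_setOf_one_le_testSeq hq.ne') hlevel
    exact hsub _ _ (subset_sdiff_union A {0}) (hunion _ _ hdiff (hfin _ (finite_singleton 0)))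
  · intro h d hd hsum ε hε
    exact h _ (summable_indicator_setOf_le_rpow_mul_rpow hp.le hq (fun n => (hd n).le) hsum hε)

/-- Mišík–Tóth theorem: for an ideal `I`, positive reals `p, q` and nonnegative reals
`α, β`, the following are equivalent:
(1) for every sequence `(d n)` of positive reals, `∑ n^α * d n ^ p < ∞` implies that
`(n^β * d n ^ q)` `I`-converges to `0`;
(2) the summable ideal generated by `(n ^ (α - β * p / q))` is contained in `I`. -/
theorem misik_toth (I : Set (Set ℕ))
    (hfin : ∀ A : Set ℕ, A.Finite → A ∈ I)
    (hsub : ∀ A B : Set ℕ, A ⊆ B → B ∈ I → A ∈ I)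
    (hunion : ∀ A B : Set ℕ, A ∈ I → B ∈ I → A ∪ B ∈ I)
    (huniv : (Set.univ : Set ℕ) ∉ I)
    (p q α β : ℝ) (hp : 0 < p) (hq : 0 < q) (hα : 0 ≤ α) (hβ : 0 ≤ β) :
    (∀ d : ℕ → ℝ, (∀ n, 0 < d n) →
      Summable (fun n : ℕ => (n : ℝ) ^ α * d n ^ p) →
      ∀ ε > (0 : ℝ), {n : ℕ | ε ≤ |(n : ℝ) ^ β * d n ^ q|} ∈ I) ↔
    (∀ A : Set ℕ,
      Summable (A.indicator fun n : ℕ => (n : ℝ) ^ (α - β * p / q)) → A ∈ I) :=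
  misik_toth_general I hfin hsub hunion p q α β hp hq
end

section
/- Let I be an ideal on ℕ. Then the following are equivalent: (1) for every sequence (a_n) of nonnegative reals with ∑ a_n < ∞, there exists a set A ∉ I such that (n·a_n)_{n∈A} converges to 0; (2) the summable ideal I_{1/n} is disjoint from the dual filter I* (no set A with ∑_{n∈A} 1/n < ∞ has complement in I). -/
open Filter Set

/-- For an ideal `I` on `ℕ`: every convergent series of nonnegative reals has
`(n * a n)` `I⁺`-convergent to `0` (i.e. convergent to `0` along some set not in `I`)
iff the summable ideal `I_{1/n}` is disjoint from the dual filter `I^*`. -/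
theorem iplus_test (I : Set (Set ℕ))
    (hfin : ∀ A : Set ℕ, A.Finite → A ∈ I)
    (hsub : ∀ A B : Set ℕ, A ⊆ B → B ∈ I → A ∈ I)
    (hunion : ∀ A B : Set ℕ, A ∈ I → B ∈ I → A ∪ B ∈ I)
    (huniv : (Set.univ : Set ℕ) ∉ I) :
    (∀ a : ℕ → ℝ, (∀ n, 0 ≤ a n) → Summable a →
      ∃ A : Set ℕ, A ∉ I ∧
        ∀ ε > (0 : ℝ), ∃ k : ℕ, ∀ n ∈ A, k ≤ n → |(n : ℝ) * a n| < ε) ↔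
    (∀ A : Set ℕ, Summable (A.indicator fun n : ℕ => 1 / (n : ℝ)) → Aᶜ ∉ I) := by
  classical
  constructor
  · -- (1) → (2)
    intro h A hA
    by_contra hc
    obtain ⟨B, hB, hconv⟩ := h (A.indicator fun n => 1 / (n : ℝ))
      (fun n => Set.indicator_nonneg (fun m _ => by positivity) n) hA
    obtain ⟨k, hk⟩ := hconv 1 one_pos
    apply hB
    apply hsub B (Aᶜ ∪ {n | n < k + 1}) _
      (hunion _ _ hc (hfin _ (Set.finite_lt_nat _)))
    intro n hn
    by_cases hnA : n ∈ A
    · right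
      simp only [mem_setOf_eq]
      by_contra hnk
      push_neg at hnk
      have h1 := hk n hn (by omega)
      rw [Set.indicator_of_mem hnA] at h1
      have hn0 : (0 : ℝ) < (n : ℝ) := by
        exact_mod_cast Nat.pos_of_ne_zero (by omega)
      rw [mul_one_div, div_self (ne_of_gt hn0)] at h1
      simp at h1
    · exact Or.inl hnA
  · -- (2) → (1)
    intro h a ha hsum
    -- choose tails
    have key : ∀ ε : ℝ, 0 < ε → ∀ L : ℕ, ∃ N, L < N ∧ ∑' j, a (j + N) ≤ ε := by
      intro ε hε L
      have h1 : ∀ᶠ N in atTop, ∑' j, a (j + N) < ε :=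
        (tendsto_sum_nat_add a).eventually_lt_const hε
      obtain ⟨N, hN1, hN2⟩ := (h1.and (eventually_gt_atTop L)).exists
      exact ⟨N, hN2, hN1.le⟩
    choose g hg1 hg2 using fun k : ℕ =>
      key ((1 / 2 : ℝ) ^ (k + 1) / ((k : ℝ) + 2)) (by positivity)
    set m : ℕ → ℕ := fun k => Nat.rec 0 (fun k prev => g k prev) k with hm
    have hm0 : m 0 = 0 := rfl
    have hmsucc : ∀ k, m (k + 1) = g k (m k) := fun k => rfl
    have hmono : StrictMono m := strictMono_nat_of_lt_succ fun k => hg1 k (m k)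
    set f : ℕ → ℕ := fun n => Nat.findGreatest (fun k => m k ≤ n) n with hf
    have hf_le : ∀ n, f n ≤ n := fun n => Nat.findGreatest_le n
    have hf_spec : ∀ n, m (f n) ≤ n := fun n =>
      Nat.findGreatest_spec (P := fun k => m k ≤ n) (Nat.zero_le n)
        (by show m 0 ≤ n; rw [hm0]; exact Nat.zero_le n)
    have hf_ge : ∀ K n, m K ≤ n → K ≤ n → K ≤ f n := fun K n h1 h2 =>
      Nat.le_findGreatest h2 h1
    set A : Set ℕ := {n | (n : ℝ) * a n < 1 / ((f n : ℝ) + 1)} with hAdef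
    refine ⟨A, ?_, ?_⟩
    · -- A ∉ I
      set S := ∑' n, a n with hS
      have hS0 : 0 ≤ S := tsum_nonneg ha
      have hh : Summable fun n => ((f n : ℝ) + 1) * a n := by
        apply summable_of_sum_range_le (c := 2 * (S + 1))
          (fun n => by have := ha n; positivity)
        intro N
        rw [← Finset.sum_fiberwise_of_maps_to (g := f) (t := Finset.range N)
          (fun i hi => Finset.mem_range.mpr (lt_of_le_of_lt (hf_le i) (Finset.mem_range.mp hi)))]
        have fiber_bound : ∀ k ∈ Finset.range N,
            ∑ n ∈ (Finset.range N).filter (fun n => f n = k), ((f n : ℝ) + 1) * a n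
              ≤ (S + 1) * (1 / 2) ^ k := by
          intro k _
          have hfib : ∀ n ∈ (Finset.range N).filter (fun n => f n = k), m k ≤ n := by
            intro n hn
            have := (Finset.mem_filter.mp hn).2
            rw [← this]; exact hf_spec n
          have hsum2 : Summable fun j => a (j + m k) := (summable_nat_add_iff (m k)).mpr hsum
          have step1 : ∑ n ∈ (Finset.range N).filter (fun n => f n = k), a n
              ≤ ∑' j, a (j + m k) := by
            have himg : ∑ j ∈ ((Finset.range N).filter (fun n => f n = k)).image
                (fun n => n - m k), a (j + m k)
                = ∑ n ∈ (Finset.range N).filter (fun n => f n = k), a (n - m k + m k) :=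
              Finset.sum_image (fun x hx y hy hxy => by
                have hx' := hfib x hx; have hy' := hfib y hy; omega)
            calc ∑ n ∈ (Finset.range N).filter (fun n => f n = k), a n
                = ∑ n ∈ (Finset.range N).filter (fun n => f n = k), a (n - m k + m k) := by
                  apply Finset.sum_congr rfl
                  intro n hn; rw [Nat.sub_add_cancel (hfib n hn)]
              _ = ∑ j ∈ ((Finset.range N).filter (fun n => f n = k)).image
                    (fun n => n - m k), a (j + m k) := himg.symm
              _ ≤ ∑' j, a (j + m k) := Summable.sum_le_tsum _ (fun i _ => ha _) hsum2
          have step2 : ∑ n ∈ (Finset.range N).filter (fun n => f n = k), ((f n : ℝ) + 1) * a n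
              = ((k : ℝ) + 1) * ∑ n ∈ (Finset.range N).filter (fun n => f n = k), a n := by
            rw [Finset.mul_sum]
            apply Finset.sum_congr rfl
            intro n hn
            have := (Finset.mem_filter.mp hn).2
            rw [this]
          rw [step2]
          have hk1 : (0 : ℝ) ≤ (k : ℝ) + 1 := by positivity
          have hfsum : (0:ℝ) ≤ ∑ n ∈ (Finset.range N).filter (fun n => f n = k), a n :=
            Finset.sum_nonneg fun n _ => ha n
          match k with
          | 0 =>
            have heq : ∑' j, a (j + m 0) = S := by
              rw [hm0]; simp [hS]
            have hsle : ∑ n ∈ (Finset.range N).filter (fun n => f n = 0), a n ≤ S :=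
              le_trans step1 (le_of_eq heq)
            simp only [Nat.cast_zero, zero_add, one_mul, pow_zero, mul_one]
            linarith
          | k + 1 =>
            have htail : ∑' j, a (j + m (k + 1)) ≤ (1 / 2 : ℝ) ^ (k + 1) / ((k : ℝ) + 2) := by
              rw [hmsucc]; exact hg2 k (m k)
            have hcast : ((k + 1 : ℕ) : ℝ) + 1 = (k : ℝ) + 2 := by push_cast; ring
            calc (((k + 1 : ℕ) : ℝ) + 1) * ∑ n ∈ (Finset.range N).filter
                  (fun n => f n = k + 1), a n
                ≤ ((k : ℝ) + 2) * ((1 / 2 : ℝ) ^ (k + 1) / ((k : ℝ) + 2)) := by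
                  rw [hcast]
                  apply mul_le_mul_of_nonneg_left _ (by positivity)
                  exact le_trans step1 htail
              _ = (1 / 2 : ℝ) ^ (k + 1) := by field_simp
              _ ≤ (S + 1) * (1 / 2) ^ (k + 1) := by
                  nlinarith [pow_nonneg (by norm_num : (0:ℝ) ≤ 1/2) (k+1)]
        calc ∑ k ∈ Finset.range N, ∑ n ∈ (Finset.range N).filter (fun n => f n = k),
              ((f n : ℝ) + 1) * a n
            ≤ ∑ k ∈ Finset.range N, (S + 1) * (1 / 2) ^ k := Finset.sum_le_sum fiber_bound
          _ = (S + 1) * ∑ k ∈ Finset.range N, (1 / 2 : ℝ) ^ k := by rw [Finset.mul_sum]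
          _ ≤ (S + 1) * 2 := by
              apply mul_le_mul_of_nonneg_left (sum_geometric_two_le N) (by linarith)
          _ = 2 * (S + 1) := by ring
      have hAc : Summable (Aᶜ.indicator fun n : ℕ => 1 / (n : ℝ)) := by
        apply Summable.of_nonneg_of_le
          (fun n => Set.indicator_nonneg (fun m _ => by positivity) n) _ hh
        intro n
        by_cases hn : n ∈ Aᶜ
        · rw [Set.indicator_of_mem hn]
          have hnA : ¬ ((n : ℝ) * a n < 1 / ((f n : ℝ) + 1)) := hn
          push_neg at hnA
          rcases Nat.eq_zero_or_pos n with h0 | h0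
          · subst h0
            simp only [Nat.cast_zero, div_zero]
            have := ha 0; positivity
          · have hn0 : (0 : ℝ) < (n : ℝ) := by exact_mod_cast h0
            have hf0 : (0 : ℝ) < (f n : ℝ) + 1 := by positivity
            rw [div_le_iff₀ hn0]
            rw [div_le_iff₀ hf0] at hnA
            nlinarith
        · rw [Set.indicator_of_notMem hn]
          have := ha n; positivity
      have := h Aᶜ hAc
      rwa [compl_compl] at this
    · -- convergence along A
      intro ε hε
      obtain ⟨K, hK⟩ := exists_nat_one_div_lt hε
      refine ⟨max K (m K), fun n hn hkn => ?_⟩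
      have hfn : K ≤ f n := hf_ge K n (le_trans (le_max_right _ _) hkn)
        (le_trans (le_max_left _ _) hkn)
      have h1 : (n : ℝ) * a n < 1 / ((f n : ℝ) + 1) := hn
      have h2 : 1 / ((f n : ℝ) + 1) ≤ 1 / ((K : ℝ) + 1) := by
        apply one_div_le_one_div_of_le (by positivity)
        have : (K : ℝ) ≤ (f n : ℝ) := by exact_mod_cast hfn
        linarith
      rw [abs_of_nonneg (by have := ha n; positivity)]
      linarith
end

section
/- If A ⊆ ℕ has positive lower asymptotic density, i.e., liminf_{n→∞} |A ∩ {1,…,n}|/n > 0, then for every infinite set X ⊆ ℕ one has A ∉ I_X, i.e., ∑_{n∈A} f_X(n) = ∞. -/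
open Filter Set

/-- For an infinite `X = {x₁ < x₂ < …} ⊆ ℕ`, `fX X i = 1 / xₙ` where `xₙ` is the least
element of `X` with `i ≤ xₙ` (equivalently, `i ∈ (x_{n-1}, xₙ]`, with `x₀ = 0`). -/
noncomputable def fX (X : Set ℕ) (i : ℕ) : ℝ :=
  1 / (sInf {x | x ∈ X ∧ i ≤ x} : ℕ)

/-- If `A ⊆ ℕ` has positive lower asymptotic density, then `A ∉ I_X` for every infinite
`X ⊆ ℕ`, i.e. `∑_{n ∈ A} fX X n = ∞`. -/
theorem not_mem_IX_of_pos_lower_density (A : Set ℕ)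
    (hd : 0 < Filter.liminf (fun n : ℕ => ((A ∩ Set.Icc 1 n).ncard : ℝ) / (n : ℝ)) atTop)
    (X : Set ℕ) (hX : X.Infinite) :
    ¬ Summable (A.indicator (fX X)) := by
  classical
  intro hsum
  set g := A.indicator (fX X) with hg
  set u : ℕ → ℝ := fun n => ((A ∩ Set.Icc 1 n).ncard : ℝ) / (n : ℝ) with hu
  -- pick δ with eventual density bound
  set δ : ℝ := liminf u atTop / 2 with hδ
  have hδpos : 0 < δ := by rw [hδ]; linarith
  have hbdd : atTop.IsBoundedUnder (· ≥ ·) u :=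
    isBoundedUnder_of ⟨0, fun n => div_nonneg (Nat.cast_nonneg _) (Nat.cast_nonneg _)⟩
  have hev : ∀ᶠ n in atTop, δ < u n :=
    eventually_lt_of_lt_liminf (by linarith) hbdd
  obtain ⟨N₀, hN₀⟩ := eventually_atTop.1 hev
  -- counting via finsets
  have hcount : ∀ n : ℕ, (A ∩ Set.Icc 1 n).ncard
      = ((Finset.Icc 1 n).filter (· ∈ A)).card := by
    intro n
    rw [show A ∩ Set.Icc 1 n = ↑((Finset.Icc 1 n).filter (· ∈ A)) by
      ext i; simp only [Set.mem_inter_iff, Set.mem_Icc, Finset.coe_filter,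
        Finset.mem_Icc, Set.mem_setOf_eq]; tauto]
    exact Set.ncard_coe_finset _
  -- apply vanishing
  obtain ⟨s, hs⟩ := hsum.vanishing (e := Set.Iio (δ / 2))
    (Iio_mem_nhds (by linarith))
  obtain ⟨M, hMX, hM⟩ := hX.exists_gt (s.sup id)
  set C : ℕ := ((Finset.Icc 1 M).filter (· ∈ A)).card with hC
  obtain ⟨N, hNX, hN⟩ := hX.exists_gt (max (max M N₀) ⌈2 * (C : ℝ) / δ⌉₊)
  have hMN : M < N := lt_of_le_of_lt (le_trans (le_max_left _ _) (le_max_left _ _)) hN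
  have hNN₀ : N₀ ≤ N :=
    le_of_lt (lt_of_le_of_lt (le_trans (le_max_right _ _) (le_max_left _ _)) hN)
  have hNceil : (⌈2 * (C : ℝ) / δ⌉₊ : ℕ) ≤ N := le_of_lt (lt_of_le_of_lt (le_max_right _ _) hN)
  have hNpos : 0 < N := lt_of_le_of_lt (Nat.zero_le _) hN
  have hNposR : (0 : ℝ) < N := by exact_mod_cast hNpos
  -- the test finset
  set t : Finset ℕ := (Finset.Ioc M N).filter (· ∈ A) with ht
  -- density bound at N : δ * N ≤ count N
  have hdens : δ * N ≤ (((Finset.Icc 1 N).filter (· ∈ A)).card : ℝ) := by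
    have h0 : δ < ((A ∩ Set.Icc 1 N).ncard : ℝ) / N := hN₀ N hNN₀
    rw [hcount, lt_div_iff₀ hNposR] at h0
    linarith
  -- C is small : (C : ℝ) ≤ δ * N / 2
  have hCsmall : (C : ℝ) ≤ δ * N / 2 := by
    have h1 : 2 * (C : ℝ) / δ ≤ N := le_trans (Nat.le_ceil _) (by exact_mod_cast hNceil)
    rw [div_le_iff₀ hδpos] at h1
    linarith
  -- card of t is big : δ * N / 2 ≤ t.card
  have hsub : (Finset.Icc 1 N).filter (· ∈ A)
      ⊆ ((Finset.Icc 1 M).filter (· ∈ A)) ∪ t := by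
    intro i hi
    simp only [Finset.mem_filter, Finset.mem_Icc] at hi
    simp only [ht, Finset.mem_union, Finset.mem_filter, Finset.mem_Icc, Finset.mem_Ioc]
    rcases le_or_gt i M with h | h
    · exact Or.inl ⟨⟨hi.1.1, h⟩, hi.2⟩
    · exact Or.inr ⟨⟨h, hi.1.2⟩, hi.2⟩
  have hcard : δ * N / 2 ≤ (t.card : ℝ) := by
    have h1 : ((Finset.Icc 1 N).filter (· ∈ A)).card ≤ C + t.card :=
      le_trans (Finset.card_le_card hsub) (Finset.card_union_le _ _)
    have h2 : (((Finset.Icc 1 N).filter (· ∈ A)).card : ℝ) ≤ (C : ℝ) + t.card := by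
      exact_mod_cast h1
    linarith
  -- each term of t contributes at least 1/N
  have hterm : ∀ i ∈ t, 1 / (N : ℝ) ≤ g i := by
    intro i hi
    simp only [ht, Finset.mem_filter, Finset.mem_Ioc] at hi
    rw [hg, Set.indicator_of_mem hi.2, fX]
    set S : Set ℕ := {x | x ∈ X ∧ i ≤ x} with hS
    have hNS : N ∈ S := ⟨hNX, hi.1.2⟩
    have hle : sInf S ≤ N := Nat.sInf_le hNS
    have hmem : sInf S ∈ S := Nat.sInf_mem ⟨N, hNS⟩
    have hpos : 0 < sInf S := lt_of_lt_of_le (lt_of_le_of_lt (Nat.zero_le M) hi.1.1) hmem.2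
    apply one_div_le_one_div_of_le
    · exact_mod_cast hpos
    · exact_mod_cast hle
  -- hence the sum over t is at least δ/2
  have hsumt : δ / 2 ≤ ∑ i ∈ t, g i := by
    have h1 : (t.card : ℝ) * (1 / N) ≤ ∑ i ∈ t, g i := by
      calc (t.card : ℝ) * (1 / N) = ∑ _i ∈ t, (1:ℝ)/N := by
            rw [Finset.sum_const, nsmul_eq_mul]
        _ ≤ ∑ i ∈ t, g i := Finset.sum_le_sum hterm
    have h2 : δ / 2 ≤ (t.card : ℝ) * (1 / N) := by
      rw [mul_one_div, le_div_iff₀ hNposR]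
      linarith
    linarith
  -- but vanishing says it's less than δ/2
  have hdisj : Disjoint t s := by
    rw [Finset.disjoint_left]
    intro i hi his
    simp only [ht, Finset.mem_filter, Finset.mem_Ioc] at hi
    have : i ≤ s.sup id := Finset.le_sup (f := id) his
    omega
  have := hs t hdisj
  rw [Set.mem_Iio] at this
  linarith
end

section
/- Let I be an ideal on ℕ. The following are equivalent: (1) for every sequence (a_n) of positive reals that is nonincreasing on some set F ∈ I*, ∑ a_n < ∞ implies that (n·a_n) I*-converges to 0; (2) for every such sequence, ∑ a_n < ∞ implies (n·a_n) I-converges to 0; (3) for every X ∉ I, the ideal I_X is disjoint from the dual filter I*. -/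
open Filter Set

def OlivierStarConv (I : Set (Set ℕ)) : Prop :=
  ∀ a : ℕ → ℝ, (∀ n, 0 < a n) → (∃ F : Set ℕ, Fᶜ ∈ I ∧ AntitoneOn a F) →
    Summable a → ∃ F : Set ℕ, Fᶜ ∈ I ∧ ∀ ε > (0 : ℝ), ∃ k : ℕ, ∀ n ∈ F, k ≤ n → |(n : ℝ) * a n| < ε

def OlivierIConv (I : Set (Set ℕ)) : Prop :=
  ∀ a : ℕ → ℝ, (∀ n, 0 < a n) → (∃ F : Set ℕ, Fᶜ ∈ I ∧ AntitoneOn a F) →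
    Summable a → ∀ ε > (0 : ℝ), {n : ℕ | ε ≤ |(n : ℝ) * a n|} ∈ I

def IXDisjointDual (I : Set (Set ℕ)) : Prop :=
  ∀ X : Set ℕ, X ∉ I → ∀ A : Set ℕ, Summable (A.indicator (fX X)) → Aᶜ ∉ I

section fX

variable {X : Set ℕ} {n : ℕ}

theorem fX_nonneg (X : Set ℕ) (n : ℕ) : 0 ≤ fX X n := by
  unfold fX; positivity

theorem exists_fX_eq (h : ∃ x ∈ X, n ≤ x) :
    ∃ d ∈ X, n ≤ d ∧ (∀ x ∈ X, n ≤ x → d ≤ x) ∧ fX X n = 1 / d :=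
  ⟨_, (Nat.sInf_mem h).1, (Nat.sInf_mem h).2, fun _ hx hnx => Nat.sInf_le ⟨hx, hnx⟩, rfl⟩

theorem fX_eq_zero (h : ¬∃ x ∈ X, n ≤ x) : fX X n = 0 := by
  have : {x | x ∈ X ∧ n ≤ x} = ∅ := eq_empty_of_forall_notMem fun x hx => h ⟨x, hx⟩
  simp [fX, this]

theorem fX_of_mem (hn : n ∈ X) : fX X n = 1 / n := by
  obtain ⟨d, -, hnd, hmin, hd⟩ := exists_fX_eq ⟨n, hn, le_rfl⟩
  rwa [le_antisymm (hmin n hn le_rfl) hnd] at hd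

theorem fX_antitoneOn (X : Set ℕ) : AntitoneOn (fX X) (Ici 1) := by
  intro m hm n _ hmn
  by_cases h : ∃ x ∈ X, n ≤ x
  · obtain ⟨d, hdX, hnd, -, hd⟩ := exists_fX_eq h
    obtain ⟨e, -, hme, hmin, he⟩ := exists_fX_eq ⟨d, hdX, hmn.trans hnd⟩
    rw [hd, he]
    have : (1 : ℝ) ≤ e := by exact_mod_cast (mem_Ici.1 hm).trans hme
    gcongr
    exact_mod_cast hmin d hdX (hmn.trans hnd)
  · rw [fX_eq_zero h]
    exact fX_nonneg X m

end fX

/-- The index of the block `(p (j - 1), p j]` containing `n`. -/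
noncomputable def blockIndex (p : ℕ → ℕ) (n : ℕ) : ℕ := sInf {j | n ≤ p j}

section blockIndex

variable {p : ℕ → ℕ}

theorem blockIndex_le_iff (hp : StrictMono p) {n j : ℕ} : blockIndex p n ≤ j ↔ n ≤ p j :=
  ⟨fun h => (Nat.sInf_mem (⟨n, hp.id_le n⟩ : {j | n ≤ p j}.Nonempty)).trans (hp.monotone h),
    fun h => Nat.sInf_le h⟩

theorem blockIndex_apply (hp : StrictMono p) (j : ℕ) : blockIndex p (p j) = j :=
  eq_of_forall_ge_iff fun _ => (blockIndex_le_iff hp).trans hp.le_iff_le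

theorem blockIndex_monotone (hp : StrictMono p) : Monotone (blockIndex p) :=
  (GaloisConnection.monotone_l fun _ _ => blockIndex_le_iff hp)

theorem tendsto_blockIndex (hp : StrictMono p) : Tendsto (blockIndex p) atTop atTop :=
  (blockIndex_monotone hp).tendsto_atTop_atTop fun j => ⟨p j, (blockIndex_apply hp j).ge⟩

theorem summable_blockIndex_mul (hp : StrictMono p) {g ε : ℕ → ℝ} (hg : 0 ≤ g)
    (hε : Summable ε) (hsmall : ∀ j (t : Finset ℕ), (∀ n ∈ t, p j < n) → ∑ n ∈ t, g n ≤ ε j) :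
    Summable fun n => (blockIndex p n : ℝ) * g n := by
  have hε0 : 0 ≤ ε := fun j => by simpa using hsmall j ∅ (by simp)
  refine summable_of_sum_range_le (c := ∑' j, ε j)
    (fun n => mul_nonneg (Nat.cast_nonneg _) (hg n)) fun N => ?_
  have hrow : ∀ n ∈ Finset.range N,
      (blockIndex p n : ℝ) * g n = ∑ j ∈ Finset.range N with p j < n, g n := by
    intro n hn
    have hle : blockIndex p n ≤ n := (blockIndex_le_iff hp).2 (hp.id_le n)
    have : {j ∈ Finset.range N | p j < n} = Finset.range (blockIndex p n) := by
      ext j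
      simp only [Finset.mem_filter, Finset.mem_range, ← not_le, ← blockIndex_le_iff hp] at hn ⊢
      omega
    rw [this, Finset.sum_const, Finset.card_range, nsmul_eq_mul]
  calc ∑ n ∈ Finset.range N, (blockIndex p n : ℝ) * g n
      = ∑ n ∈ Finset.range N, ∑ j ∈ Finset.range N with p j < n, g n :=
        Finset.sum_congr rfl hrow
    _ = ∑ j ∈ Finset.range N, ∑ n ∈ Finset.range N with p j < n, g n := by
      simp only [Finset.sum_filter]
      exact Finset.sum_comm
    _ ≤ ∑ j ∈ Finset.range N, ε j := Finset.sum_le_sum fun j _ => hsmall j _ (by simp)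
    _ ≤ ∑' j, ε j := hε.sum_le_tsum _ fun j _ => hε0 j

end blockIndex

theorem Summable.eventually_forall_sum_le {g : ℕ → ℝ} (hg : Summable g) {δ : ℝ} (hδ : 0 < δ) :
    ∀ᶠ m in atTop, ∀ t : Finset ℕ, (∀ n ∈ t, m < n) → ∑ n ∈ t, g n ≤ δ := by
  obtain ⟨s, hs⟩ := hg.vanishing (Iio_mem_nhds hδ)
  filter_upwards [eventually_ge_atTop (s.sup id)] with m hm t ht
  refine (hs t (Finset.disjoint_left.2 fun n hnt hns => ?_)).le
  exact (ht n hnt).not_ge ((Finset.le_sup (f := id) hns).trans hm)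

theorem exists_blockWeight {a : ℕ → ℝ} (ha : 0 ≤ a) (hsum : Summable a) {P : ℕ → Prop}
    (hP : ∃ᶠ n in atTop, P n) :
    ∃ w : ℕ → ℕ, Monotone w ∧ Tendsto w atTop atTop ∧ Summable (fun n => (w n : ℝ) * a n) ∧
      ∀ n, ∃ d, P d ∧ n ≤ d ∧ w d ≤ w n := by
  obtain ⟨p, hp, hpP⟩ := extraction_forall_of_frequently fun j =>
    hP.and_eventually <|
      hsum.eventually_forall_sum_le (pow_pos (by norm_num : (0 : ℝ) < 1 / 2) j)
  refine ⟨blockIndex p, blockIndex_monotone hp, tendsto_blockIndex hp,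
    summable_blockIndex_mul hp ha summable_geometric_two fun j => (hpP j).2, fun n => ?_⟩
  exact ⟨p (blockIndex p n), (hpP _).1, (blockIndex_le_iff hp).1 le_rfl,
    (blockIndex_apply hp _).le⟩

theorem fX_le_mul_of_antitoneOn {a c : ℕ → ℝ} {F : Set ℕ} (ha : 0 ≤ a)
    (hanti : AntitoneOn a F) (hc : Monotone c) (hc0 : 0 ≤ c) {n : ℕ} (hn : n ∈ F)
    (hd : ∃ d ∈ F, 1 ≤ c d * (d * a d) ∧ n ≤ d ∧ c d ≤ c n) :
    fX {m | m ∈ F ∧ 1 ≤ c m * (m * a m)} n ≤ c n * a n := by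
  obtain ⟨d, hdF, hd1, hnd, hcd⟩ := hd
  obtain ⟨e, ⟨heF, he1⟩, hne, hmin, hfe⟩ :=
    exists_fX_eq (X := {m | m ∈ F ∧ 1 ≤ c m * (m * a m)}) ⟨d, ⟨hdF, hd1⟩, hnd⟩
  have he : (0 : ℝ) < e := by
    rcases Nat.eq_zero_or_pos e with rfl | he
    · norm_num at he1
    · exact_mod_cast he
  rw [hfe, div_le_iff₀ he]
  calc 1 ≤ c e * (e * a e) := he1
    _ = e * (c e * a e) := by ring
    _ ≤ e * (c n * a n) := by
      gcongr
      · exact ha e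
      · exact hc0 n
      · exact (hc (hmin d ⟨hdF, hd1⟩ hnd)).trans hcd
      · exact hanti hn heF hne
    _ = c n * a n * e := by ring

theorem exists_forall_abs_lt_of_mul_lt_one {b c : ℕ → ℝ} {G : Set ℕ} (hb : 0 ≤ b)
    (hc : Tendsto c atTop atTop) (h : ∀ n ∈ G, c n * b n < 1) :
    ∀ ε > (0 : ℝ), ∃ k : ℕ, ∀ n ∈ G, k ≤ n → |b n| < ε := by
  intro ε hε
  obtain ⟨k, hk⟩ := eventually_atTop.1 (hc.eventually_ge_atTop ε⁻¹)
  refine ⟨k, fun n hn hkn => ?_⟩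
  rw [abs_of_nonneg (hb n)]
  by_contra! hbn
  have := mul_le_mul (hk n hkn) hbn hε.le ((inv_nonneg.2 hε.le).trans (hk n hkn))
  rw [inv_mul_cancel₀ hε.ne'] at this
  linarith [h n hn]

theorem OlivierStarConv.olivierIConv {I : Set (Set ℕ)}
    (hfin : ∀ A : Set ℕ, A.Finite → A ∈ I)
    (hsub : ∀ A B : Set ℕ, A ⊆ B → B ∈ I → A ∈ I)
    (hunion : ∀ A B : Set ℕ, A ∈ I → B ∈ I → A ∪ B ∈ I)
    (h : OlivierStarConv I) : OlivierIConv I := by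
  intro a hpos hanti hsum ε hε
  obtain ⟨F, hFc, hF⟩ := h a hpos hanti hsum
  obtain ⟨k, hk⟩ := hF ε hε
  refine hsub _ (Fᶜ ∪ Iio k) (fun n hn => ?_) (hunion _ _ hFc (hfin _ (finite_Iio k)))
  by_contra hnF
  simp only [mem_union, mem_compl_iff, mem_Iio, not_or, not_not, not_lt] at hnF
  exact (hk n hnF.1 hnF.2).not_ge hn

theorem OlivierIConv.iXDisjointDual {I : Set (Set ℕ)}
    (hfin : ∀ A : Set ℕ, A.Finite → A ∈ I)
    (hsub : ∀ A B : Set ℕ, A ⊆ B → B ∈ I → A ∈ I)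
    (hunion : ∀ A B : Set ℕ, A ∈ I → B ∈ I → A ∪ B ∈ I)
    (h : OlivierIConv I) : IXDisjointDual I := by
  intro X hX A hA hAc
  set a : ℕ → ℝ := fun n => A.indicator (fX X) n + (1 / 2) ^ n
  set F := A ∩ Ici 1
  have hFc : Fᶜ ∈ I := by
    refine hsub _ (Aᶜ ∪ {0}) (fun n hn => ?_) (hunion _ _ hAc (hfin _ (finite_singleton 0)))
    simp only [F, mem_compl_iff, mem_inter_iff, mem_Ici, not_and, not_le] at hn
    by_cases hnA : n ∈ A
    · exact Or.inr (by simpa using hn hnA)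
    · exact Or.inl hnA
  have hanti : AntitoneOn a F := fun m hm n hn hmn => by
    simp only [a, indicator_of_mem hm.1, indicator_of_mem hn.1]
    exact add_le_add (fX_antitoneOn X hm.2 hn.2 hmn)
      (pow_le_pow_of_le_one (by norm_num) (by norm_num) hmn)
  have hpos : ∀ n, 0 < a n := fun n =>
    add_pos_of_nonneg_of_pos (indicator_nonneg (fun m _ => fX_nonneg X m) n) (by positivity)
  have hlarge := h a hpos ⟨F, hFc, hanti⟩ (hA.add summable_geometric_two) 1 one_pos
  refine hX (hsub _ _ (fun n hnX => ?_) (hunion _ _ hlarge hFc))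
  by_cases hnF : n ∈ F
  · left
    have hn : (0 : ℝ) < n := by exact_mod_cast hnF.2
    have : (n : ℝ) * a n = 1 + n * (1 / 2) ^ n := by
      simp only [a, indicator_of_mem hnF.1, fX_of_mem hnX]
      field_simp
    change 1 ≤ |(n : ℝ) * a n|
    rw [this]
    exact (le_add_of_nonneg_right (by positivity)).trans (le_abs_self _)
  · exact Or.inr hnF

theorem IXDisjointDual.olivierStarConv {I : Set (Set ℕ)}
    (hunion : ∀ A B : Set ℕ, A ∈ I → B ∈ I → A ∪ B ∈ I)
    (h : IXDisjointDual I) : OlivierStarConv I := by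
  rintro a hpos ⟨F, hFc, hanti⟩ hsum
  by_cases hconv : ∀ ε > (0 : ℝ), ∃ k : ℕ, ∀ n ∈ F, k ≤ n → |(n : ℝ) * a n| < ε
  · exact ⟨F, hFc, hconv⟩
  have ha0 : 0 ≤ a := fun n => (hpos n).le
  have hb0 : ∀ n : ℕ, 0 ≤ (n : ℝ) * a n := fun n => mul_nonneg n.cast_nonneg (ha0 n)
  obtain ⟨δ, hδ, hfreq⟩ : ∃ δ > (0 : ℝ), ∃ᶠ n in atTop, n ∈ F ∧ δ ≤ (n : ℝ) * a n := by
    push Not at hconv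
    obtain ⟨δ, hδ, hlarge⟩ := hconv
    refine ⟨δ, hδ, frequently_atTop.2 fun k => ?_⟩
    obtain ⟨n, hnF, hkn, hn⟩ := hlarge k
    exact ⟨n, hkn, hnF, abs_of_nonneg (hb0 n) ▸ hn⟩
  obtain ⟨w, hw, hw_tendsto, hw_sum, hw_block⟩ := exists_blockWeight ha0 hsum hfreq
  set c : ℕ → ℝ := fun n => δ⁻¹ + w n
  set X := {m | m ∈ F ∧ 1 ≤ c m * (m * a m)}
  have hfX : ∀ n ∈ F, fX X n ≤ c n * a n := fun n hn => by
    obtain ⟨d, ⟨hdF, hδd⟩, hnd, hwd⟩ := hw_block n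
    refine fX_le_mul_of_antitoneOn ha0 hanti (fun m m' hmm' => ?_) (fun m => by positivity) hn
      ⟨d, hdF, ?_, hnd, ?_⟩
    · simp only [c]
      gcongr
      exact hw hmm'
    · calc 1 = δ⁻¹ * δ := (inv_mul_cancel₀ hδ.ne').symm
        _ ≤ c d * (d * a d) := by gcongr; exact le_add_of_nonneg_right (Nat.cast_nonneg _)
    · simp only [c]
      gcongr
  have hXI : X ∈ I := by
    by_contra hX
    refine h X hX F (Summable.of_nonneg_of_le (indicator_nonneg fun m _ => fX_nonneg X m)
      (fun n => ?_) ((hsum.mul_left δ⁻¹).add hw_sum)) hFc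
    by_cases hn : n ∈ F
    · rw [indicator_of_mem hn, ← add_mul]
      exact hfX n hn
    · rw [indicator_of_notMem hn, ← add_mul]
      exact mul_nonneg (by positivity) (ha0 n)
  refine ⟨F \ X, Set.compl_sdiff ▸ hunion _ _ hXI hFc, exists_forall_abs_lt_of_mul_lt_one hb0
    (tendsto_atTop_add_const_left _ _ (tendsto_natCast_atTop_atTop.comp hw_tendsto))
    fun n hn => not_le.1 fun h => hn.2 ⟨hn.1, h⟩⟩

theorem star_ideal_test_general (I : Set (Set ℕ))
    (hfin : ∀ A : Set ℕ, A.Finite → A ∈ I)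
    (hsub : ∀ A B : Set ℕ, A ⊆ B → B ∈ I → A ∈ I)
    (hunion : ∀ A B : Set ℕ, A ∈ I → B ∈ I → A ∪ B ∈ I) :
    ((∀ a : ℕ → ℝ, (∀ n, 0 < a n) →
        (∃ F : Set ℕ, Fᶜ ∈ I ∧ ∀ m ∈ F, ∀ n ∈ F, m ≤ n → a n ≤ a m) →
        Summable a →
        ∃ F : Set ℕ, Fᶜ ∈ I ∧
          ∀ ε > (0 : ℝ), ∃ k : ℕ, ∀ n ∈ F, k ≤ n → |(n : ℝ) * a n| < ε) ↔
      (∀ a : ℕ → ℝ, (∀ n, 0 < a n) →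
        (∃ F : Set ℕ, Fᶜ ∈ I ∧ ∀ m ∈ F, ∀ n ∈ F, m ≤ n → a n ≤ a m) →
        Summable a →
        ∀ ε > (0 : ℝ), {n : ℕ | ε ≤ |(n : ℝ) * a n|} ∈ I)) ∧
    ((∀ a : ℕ → ℝ, (∀ n, 0 < a n) →
        (∃ F : Set ℕ, Fᶜ ∈ I ∧ ∀ m ∈ F, ∀ n ∈ F, m ≤ n → a n ≤ a m) →
        Summable a →
        ∀ ε > (0 : ℝ), {n : ℕ | ε ≤ |(n : ℝ) * a n|} ∈ I) ↔
      (∀ X : Set ℕ, X ∉ I →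
        ∀ A : Set ℕ, Summable (A.indicator (fX X)) → Aᶜ ∉ I)) := by
  have h12 : OlivierStarConv I → OlivierIConv I := OlivierStarConv.olivierIConv hfin hsub hunion
  have h23 : OlivierIConv I → IXDisjointDual I := OlivierIConv.iXDisjointDual hfin hsub hunion
  have h31 : IXDisjointDual I → OlivierStarConv I := IXDisjointDual.olivierStarConv hunion
  exact ⟨⟨h12, h31 ∘ h23⟩, ⟨h23, h12 ∘ h31⟩⟩

/-- Characterization of ideals for which Olivier's theorem holds for `I^*`-nonincreasing
sequences: conditions (1) (`I^*`-convergence), (2) (`I`-convergence) and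
(3) (`I_X ∩ I^* = ∅` for every `X ∉ I`) are equivalent. -/
theorem star_ideal_test (I : Set (Set ℕ))
    (hfin : ∀ A : Set ℕ, A.Finite → A ∈ I)
    (hsub : ∀ A B : Set ℕ, A ⊆ B → B ∈ I → A ∈ I)
    (hunion : ∀ A B : Set ℕ, A ∈ I → B ∈ I → A ∪ B ∈ I)
    (huniv : (Set.univ : Set ℕ) ∉ I) :
    ((∀ a : ℕ → ℝ, (∀ n, 0 < a n) →
        (∃ F : Set ℕ, Fᶜ ∈ I ∧ ∀ m ∈ F, ∀ n ∈ F, m ≤ n → a n ≤ a m) →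
        Summable a →
        ∃ F : Set ℕ, Fᶜ ∈ I ∧
          ∀ ε > (0 : ℝ), ∃ k : ℕ, ∀ n ∈ F, k ≤ n → |(n : ℝ) * a n| < ε) ↔
      (∀ a : ℕ → ℝ, (∀ n, 0 < a n) →
        (∃ F : Set ℕ, Fᶜ ∈ I ∧ ∀ m ∈ F, ∀ n ∈ F, m ≤ n → a n ≤ a m) →
        Summable a →
        ∀ ε > (0 : ℝ), {n : ℕ | ε ≤ |(n : ℝ) * a n|} ∈ I)) ∧
    ((∀ a : ℕ → ℝ, (∀ n, 0 < a n) →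
        (∃ F : Set ℕ, Fᶜ ∈ I ∧ ∀ m ∈ F, ∀ n ∈ F, m ≤ n → a n ≤ a m) →
        Summable a →
        ∀ ε > (0 : ℝ), {n : ℕ | ε ≤ |(n : ℝ) * a n|} ∈ I) ↔
      (∀ X : Set ℕ, X ∉ I →
        ∀ A : Set ℕ, Summable (A.indicator (fX X)) → Aᶜ ∉ I)) :=
  star_ideal_test_general I hfin hsub hunion
end

section
/- Let I be an ideal on ℕ. The following are equivalent: (1) for every I*-nonincreasing sequence (a_n) of positive reals with ∑ a_n < ∞, there exists A ∉ I such that (n·a_n)_{n∈A} converges to 0; (2) I_{1/n} ∩ I* = ∅. -/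
open Filter Set

/-- For an ideal `I`: every `I^*`-nonincreasing sequence of positive reals with
convergent series has `(n * a n)` convergent to `0` along some set `A ∉ I`, iff the
summable ideal `I_{1/n}` is disjoint from the dual filter `I^*`. -/
theorem star_plus_test (I : Set (Set ℕ))
    (hfin : ∀ A : Set ℕ, A.Finite → A ∈ I)
    (hsub : ∀ A B : Set ℕ, A ⊆ B → B ∈ I → A ∈ I)
    (hunion : ∀ A B : Set ℕ, A ∈ I → B ∈ I → A ∪ B ∈ I)
    (huniv : (Set.univ : Set ℕ) ∉ I) :
    (∀ a : ℕ → ℝ, (∀ n, 0 < a n) →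
      (∃ F : Set ℕ, Fᶜ ∈ I ∧ ∀ m ∈ F, ∀ n ∈ F, m ≤ n → a n ≤ a m) →
      Summable a →
      ∃ A : Set ℕ, A ∉ I ∧
        ∀ ε > (0 : ℝ), ∃ k : ℕ, ∀ n ∈ A, k ≤ n → |(n : ℝ) * a n| < ε) ↔
    (∀ A : Set ℕ, Summable (A.indicator fun n : ℕ => 1 / (n : ℝ)) → Aᶜ ∉ I) := by
  constructor
  · -- (1) → (2)
    intro h1 A hA hAc
    classical
    set a : ℕ → ℝ := fun n => if n ∈ A ∧ n ≠ 0 then 1 / (n : ℝ) else (1/2 : ℝ)^n with ha_def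
    have hpos : ∀ n, 0 < a n := by
      intro n
      by_cases h : n ∈ A ∧ n ≠ 0
      · have hn : 0 < (n : ℝ) := by
          exact_mod_cast Nat.pos_of_ne_zero h.2
        simp only [ha_def, if_pos h]
        positivity
      · simp only [ha_def, if_neg h]
        positivity
    have hFc : (A \ {0})ᶜ ∈ I := by
      have : (A \ {0})ᶜ = Aᶜ ∪ {0} := by
        ext n; simp [Set.mem_diff, or_comm]; tauto
      rw [this]
      exact hunion _ _ hAc (hfin _ (Set.finite_singleton 0))
    have hmono : ∀ m ∈ A \ {0}, ∀ n ∈ A \ {0}, m ≤ n → a n ≤ a m := by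
      intro m hm n hn hmn
      have hm' : m ∈ A ∧ m ≠ 0 := ⟨hm.1, by simpa using hm.2⟩
      have hn' : n ∈ A ∧ n ≠ 0 := ⟨hn.1, by simpa using hn.2⟩
      simp only [ha_def, if_pos hm', if_pos hn']
      have hm0 : 0 < (m : ℝ) := by exact_mod_cast Nat.pos_of_ne_zero hm'.2
      have : (m : ℝ) ≤ n := by exact_mod_cast hmn
      exact one_div_le_one_div_of_le hm0 this
    have hsum : Summable a := by
      apply Summable.of_nonneg_of_le (fun n => (hpos n).le)
        (f := fun n => A.indicator (fun n : ℕ => 1 / (n : ℝ)) n + (1/2 : ℝ)^n)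
      · intro n
        by_cases h : n ∈ A ∧ n ≠ 0
        · have : A.indicator (fun n : ℕ => 1 / (n : ℝ)) n = 1 / (n : ℝ) :=
            Set.indicator_of_mem h.1 _
          simp only [ha_def, if_pos h, this]
          have : (0 : ℝ) ≤ (1/2 : ℝ)^n := by positivity
          linarith
        · have hind : 0 ≤ A.indicator (fun n : ℕ => 1 / (n : ℝ)) n := by
            apply Set.indicator_nonneg
            intro i _
            positivity
          simp only [ha_def, if_neg h]
          linarith
      · exact hA.add summable_geometric_two
    obtain ⟨B, hBI, hconv⟩ := h1 a hpos ⟨A \ {0}, hFc, hmono⟩ hsum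
    obtain ⟨k, hk⟩ := hconv (1/2) (by norm_num)
    -- B ∩ (A \ {0}) is not in I, hence infinite
    have hSnotI : B ∩ (A \ {0}) ∉ I := by
      intro hS
      apply hBI
      apply hsub B ((B ∩ (A \ {0})) ∪ (A \ {0})ᶜ) _ (hunion _ _ hS hFc)
      intro n hn
      by_cases h : n ∈ A \ {0}
      · exact Or.inl ⟨hn, h⟩
      · exact Or.inr h
    have hSinf : (B ∩ (A \ {0})).Infinite := by
      intro hfin'
      exact hSnotI (hfin _ hfin')
    obtain ⟨n, hnS, hkn⟩ := hSinf.exists_gt k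
    have hn' : n ∈ A ∧ n ≠ 0 := ⟨hnS.2.1, by simpa using hnS.2.2⟩
    have := hk n hnS.1 hkn.le
    have hn0 : (n : ℝ) ≠ 0 := by exact_mod_cast hn'.2
    rw [ha_def] at this
    simp only [if_pos hn'] at this
    rw [mul_one_div, div_self hn0] at this
    norm_num at this
  · -- (2) → (1)
    intro h2 a hpos _ hsum
    -- tail sums
    set R : ℕ → ℝ := fun i => ∑' k, a (k + i) with hR_def
    have hsum' : ∀ i, Summable fun k => a (k + i) := fun i =>
      (summable_nat_add_iff i).mpr hsum
    have hRnonneg : ∀ i, 0 ≤ R i := fun i =>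
      tsum_nonneg (fun k => (hpos _).le)
    have hRrec : ∀ i, R i = a i + R (i + 1) := by
      intro i
      have h0 := Summable.tsum_eq_zero_add (hsum' i)
      simp only [zero_add] at h0
      rw [hR_def]
      simp only
      rw [h0]
      congr 1
      apply tsum_congr
      intro k
      congr 1
      omega
    have hRpos : ∀ i, 0 < R i := by
      intro i
      rw [hRrec i]
      have := hpos i
      have := hRnonneg (i + 1)
      linarith
    have hRanti : ∀ i, R (i + 1) ≤ R i := by
      intro i
      rw [hRrec i]
      have := hpos i
      linarith
    have htendR : Tendsto R atTop (nhds 0) := tendsto_sum_nat_add a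
    have htends : Tendsto (fun i => Real.sqrt (R i)) atTop (nhds 0) := by
      have := htendR.sqrt
      rwa [Real.sqrt_zero] at this
    set A : Set ℕ := {n | (n : ℝ) * a n < Real.sqrt (R n)} with hA_def
    -- ∑_{n ∈ Aᶜ} 1/n < ∞
    have hsqle : ∀ i, Real.sqrt (R (i+1)) ≤ Real.sqrt (R i) := fun i =>
      Real.sqrt_le_sqrt (hRanti i)
    have hsummB : Summable (Aᶜ.indicator fun n : ℕ => 1 / (n : ℝ)) := by
      apply Summable.of_nonneg_of_le
        (f := fun n => 2 * (Real.sqrt (R n) - Real.sqrt (R (n+1))))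
      · intro n
        apply Set.indicator_nonneg
        intro i _
        positivity
      · intro n
        by_cases h : n ∈ Aᶜ
        · rw [Set.indicator_of_mem h]
          have hnA : Real.sqrt (R n) ≤ (n : ℝ) * a n := not_lt.mp h
          have hsq : 0 < Real.sqrt (R n) := Real.sqrt_pos.mpr (hRpos n)
          have hn0 : 0 < (n : ℝ) := by
            rcases Nat.eq_zero_or_pos n with h0 | h0
            · exfalso
              rw [h0] at hnA hsq
              simp at hnA
              linarith
            · exact_mod_cast h0
          have step1 : 1 / (n : ℝ) ≤ a n / Real.sqrt (R n) := by
            rw [div_le_div_iff₀ hn0 hsq]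
            rw [mul_comm] at hnA
            linarith
          have step2 : a n / Real.sqrt (R n) ≤
              2 * (Real.sqrt (R n) - Real.sqrt (R (n+1))) := by
            have han : a n = R n - R (n + 1) := by
              have := hRrec n; linarith
            have hx : Real.sqrt (R n) ^ 2 = R n := Real.sq_sqrt (hRnonneg n)
            have hy : Real.sqrt (R (n+1)) ^ 2 = R (n+1) :=
              Real.sq_sqrt (hRnonneg (n+1))
            rw [div_le_iff₀ hsq, han]
            nlinarith [hsqle n, Real.sqrt_nonneg (R (n+1)), sq_nonneg
              (Real.sqrt (R n) - Real.sqrt (R (n+1)))]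
          linarith
        · rw [Set.indicator_of_notMem h]
          have := hsqle n
          linarith
      · apply summable_of_sum_range_le (c := 2 * Real.sqrt (R 0))
        · intro n
          have := hsqle n
          linarith
        · intro n
          have : ∑ i ∈ Finset.range n,
              (2 * (Real.sqrt (R i) - Real.sqrt (R (i+1)))) =
              2 * (Real.sqrt (R 0) - Real.sqrt (R n)) := by
            rw [← Finset.mul_sum, Finset.sum_range_sub' (fun i => Real.sqrt (R i))]
          rw [this]
          have := Real.sqrt_nonneg (R n)
          linarith
    have hAnotI : A ∉ I := by
      have := h2 Aᶜ hsummB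
      rwa [compl_compl] at this
    refine ⟨A, hAnotI, ?_⟩
    intro ε hε
    have hev : ∀ᶠ i in atTop, Real.sqrt (R i) < ε :=
      htends.eventually (eventually_lt_nhds hε)
    obtain ⟨k, hk⟩ := eventually_atTop.mp hev
    refine ⟨k, fun n hn hkn => ?_⟩
    have h1 : (n : ℝ) * a n < Real.sqrt (R n) := hn
    have h2' : Real.sqrt (R n) < ε := hk n hkn
    have hnn : 0 ≤ (n : ℝ) * a n := mul_nonneg (Nat.cast_nonneg n) (hpos n).le
    rw [abs_of_nonneg hnn]
    linarith
end

section
/- If I is an ideal on ℕ such that every A ∈ I has upper asymptotic density strictly less than 1, then for every sequence (a_n) of positive reals that is nonincreasing on some set of I* and satisfies ∑ a_n < ∞, there exists F ∈ I* such that (n·a_n)_{n∈F} converges to 0. -/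
open Filter Set

/-- Faisant–Grekos–Mišík: if every set in the ideal `I` has upper asymptotic density
strictly less than `1`, then for every sequence of positive reals, nonincreasing on some
set of `I^*`, with convergent series, the sequence `(n * a n)` `I^*`-converges to `0`. -/
theorem faisant_grekos_misik (I : Set (Set ℕ))
    (hfin : ∀ A : Set ℕ, A.Finite → A ∈ I)
    (hsub : ∀ A B : Set ℕ, A ⊆ B → B ∈ I → A ∈ I)
    (hunion : ∀ A B : Set ℕ, A ∈ I → B ∈ I → A ∪ B ∈ I)
    (huniv : (Set.univ : Set ℕ) ∉ I)
    (hdens : ∀ A ∈ I,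
      Filter.limsup (fun n : ℕ => ((A ∩ Set.Icc 1 n).ncard : ℝ) / (n : ℝ)) atTop < 1)
    (a : ℕ → ℝ) (hpos : ∀ n, 0 < a n)
    (hmono : ∃ F : Set ℕ, Fᶜ ∈ I ∧ ∀ m ∈ F, ∀ n ∈ F, m ≤ n → a n ≤ a m)
    (hsum : Summable a) :
    ∃ F : Set ℕ, Fᶜ ∈ I ∧
      ∀ ε > (0 : ℝ), ∃ k : ℕ, ∀ n ∈ F, k ≤ n → |(n : ℝ) * a n| < ε := by
  classical
  obtain ⟨F, hFc, hF⟩ := hmono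
  refine ⟨F, hFc, ?_⟩
  -- upper density of Fᶜ
  set g : ℕ → ℝ := fun n => ((Fᶜ ∩ Set.Icc 1 n).ncard : ℝ) / (n : ℝ) with hg
  have hd : Filter.limsup g atTop < 1 := hdens Fᶜ hFc
  set d : ℝ := Filter.limsup g atTop with hdd
  set η : ℝ := (d + 1) / 2 with hη
  set δ : ℝ := 1 - η with hδ
  set θ : ℝ := δ / 2 with hθ
  have hθpos : 0 < θ := by
    rw [hθ, hδ, hη]; linarith
  -- boundedness of g
  have hIccn : ∀ n : ℕ, (Set.Icc 1 n).ncard = n := by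
    intro n
    rw [← Finset.coe_Icc, Set.ncard_coe_finset, Nat.card_Icc]
    omega
  have hbound : ∀ n, g n ≤ 1 := by
    intro n
    rcases Nat.eq_zero_or_pos n with h0 | h0
    · simp [hg, h0]
    · have h1 : (Fᶜ ∩ Set.Icc 1 n).ncard ≤ (Set.Icc 1 n).ncard :=
        Set.ncard_le_ncard inter_subset_right (Set.finite_Icc _ _)
      rw [hIccn] at h1
      have hn : (0 : ℝ) < n := by exact_mod_cast h0
      rw [hg]
      rw [div_le_one hn]
      exact_mod_cast h1
  have hev : ∀ᶠ n in atTop, g n < η := by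
    refine Filter.eventually_lt_of_limsup_lt ?_ (Filter.isBoundedUnder_of ⟨1, hbound⟩)
    rw [← hdd, hη]; linarith
  obtain ⟨N₀, hN₀⟩ := Filter.eventually_atTop.mp hev
  -- main estimate
  intro ε hε
  -- Cauchy tail
  obtain ⟨s, hs⟩ := summable_iff_vanishing_norm.mp hsum (θ * ε) (by positivity)
  set N : ℕ := s.sup id with hN
  refine ⟨max N₀ (max 1 ⌈(N : ℝ) / θ⌉₊), fun n hnF hn => ?_⟩
  have hn0 : N₀ ≤ n := le_trans (le_max_left _ _) hn
  have hn1 : 1 ≤ n := le_trans (le_trans (le_max_left _ _) (le_max_right _ _)) hn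
  have hnceil : ⌈(N : ℝ) / θ⌉₊ ≤ n := le_trans (le_trans (le_max_right _ _) (le_max_right _ _)) hn
  have hnR : (0 : ℝ) < n := by exact_mod_cast hn1
  have hθn : (N : ℝ) ≤ θ * n := by
    have := (Nat.ceil_le).mp hnceil
    rw [div_le_iff₀ hθpos] at this
    linarith
  set m₀ : ℕ := ⌊θ * n⌋₊ with hm₀
  have hNm₀ : N ≤ m₀ := Nat.le_floor hθn
  have hm₀le : (m₀ : ℝ) ≤ θ * n := Nat.floor_le (by positivity)
  -- counting
  set T : Finset ℕ := (Finset.Ioc m₀ n).filter (· ∈ F) with hT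
  set U : Finset ℕ := (Finset.Icc 1 n).filter (· ∈ F) with hU
  set V : Finset ℕ := (Finset.Icc 1 n).filter (· ∈ Fᶜ) with hV
  have hUV : U.card + V.card = n := by
    have := Finset.card_filter_add_card_filter_not
      (s := Finset.Icc 1 n) (p := (· ∈ F))
    have hVV : (Finset.Icc 1 n).filter (fun x => ¬ x ∈ F) = V := by
      apply Finset.filter_congr
      intro x _
      simp [Set.mem_compl_iff]
    rw [hVV] at this
    rw [hU, this, Nat.card_Icc]
    omega
  have hVcard : ((Fᶜ ∩ Set.Icc 1 n).ncard : ℝ) = (V.card : ℝ) := by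
    have : Fᶜ ∩ Set.Icc 1 n = ↑V := by
      ext x
      simp [hV, and_comm]
    rw [this, Set.ncard_coe_finset]
  have hgn : g n < η := hN₀ n hn0
  have hVlt : (V.card : ℝ) < η * n := by
    rw [hg] at hgn
    rw [← hVcard]
    calc ((Fᶜ ∩ Set.Icc 1 n).ncard : ℝ) = (((Fᶜ ∩ Set.Icc 1 n).ncard : ℝ) / n) * n := by
          field_simp
      _ < η * n := by
          apply mul_lt_mul_of_pos_right hgn hnR
  have hUge : δ * n ≤ (U.card : ℝ) := by
    have : (U.card : ℝ) + (V.card : ℝ) = n := by exact_mod_cast hUV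
    rw [hδ]
    linarith
  -- U ⊆ T ∪ Icc 1 m₀
  have hUsub : U ⊆ T ∪ Finset.Icc 1 m₀ := by
    intro x hx
    rw [hU, Finset.mem_filter, Finset.mem_Icc] at hx
    rcases le_or_gt x m₀ with h | h
    · exact Finset.mem_union_right _ (Finset.mem_Icc.mpr ⟨hx.1.1, h⟩)
    · exact Finset.mem_union_left _ (by
        rw [hT, Finset.mem_filter, Finset.mem_Ioc]
        exact ⟨⟨h, hx.1.2⟩, hx.2⟩)
  have hTcard : θ * n ≤ (T.card : ℝ) := by
    have h1 : U.card ≤ T.card + m₀ := by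
      calc U.card ≤ (T ∪ Finset.Icc 1 m₀).card := Finset.card_le_card hUsub
        _ ≤ T.card + (Finset.Icc 1 m₀).card := Finset.card_union_le _ _
        _ = T.card + m₀ := by rw [Nat.card_Icc]; omega
    have h1R : (U.card : ℝ) ≤ (T.card : ℝ) + m₀ := by exact_mod_cast h1
    have : δ * n = θ * n + θ * n := by rw [hθ]; ring
    linarith
  -- sum over T bounds
  have hsumT : (T.card : ℝ) * a n ≤ ∑ m ∈ T, a m := by
    have := Finset.card_nsmul_le_sum T a (a n) ?_
    · rwa [nsmul_eq_mul] at this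
    · intro m hm
      rw [hT, Finset.mem_filter, Finset.mem_Ioc] at hm
      exact hF m hm.2 n hnF hm.1.2
  have hdisj : Disjoint T s := by
    rw [Finset.disjoint_left]
    intro x hx hxs
    rw [hT, Finset.mem_filter, Finset.mem_Ioc] at hx
    have : x ≤ N := Finset.le_sup (f := id) hxs
    omega
  have htail : ∑ m ∈ T, a m < θ * ε := by
    have := hs T hdisj
    calc ∑ m ∈ T, a m ≤ ‖∑ m ∈ T, a m‖ := le_abs_self _
      _ < θ * ε := this
  have hkey : θ * ((n : ℝ) * a n) < θ * ε := by
    calc θ * ((n : ℝ) * a n) = (θ * n) * a n := by ring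
      _ ≤ (T.card : ℝ) * a n := mul_le_mul_of_nonneg_right hTcard (hpos n).le
      _ ≤ ∑ m ∈ T, a m := hsumT
      _ < θ * ε := htail
  have : (n : ℝ) * a n < ε := lt_of_mul_lt_mul_left hkey hθpos.le
  rwa [abs_of_pos (mul_pos hnR (hpos n))]
end

section
/- Let I be an ideal on ℕ and AOS(I) = {(a_n) ∈ ℓ₁ : (n·a_n) does not I-converge to 0}. Then AOS(I) is nonempty if and only if there exists a set A ∉ I with ∑_{n∈A} 1/n < ∞. -/
open Filter Set

/-- For an ideal `I` on `ℕ`, the set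
`AOS(I) = {(a n) ∈ ℓ₁ : (n * a n) does not I-converge to 0}` is nonempty iff some
`A ∉ I` has `∑_{n ∈ A} 1/n < ∞`. -/
theorem AOS_nonempty_iff (I : Set (Set ℕ))
    (hfin : ∀ A : Set ℕ, A.Finite → A ∈ I)
    (hsub : ∀ A B : Set ℕ, A ⊆ B → B ∈ I → A ∈ I)
    (hunion : ∀ A B : Set ℕ, A ∈ I → B ∈ I → A ∪ B ∈ I)
    (huniv : (Set.univ : Set ℕ) ∉ I) :
    (∃ f : lp (fun _ : ℕ => ℝ) 1,
      ¬ ∀ ε > (0 : ℝ), {n : ℕ | ε ≤ |(n : ℝ) * f n|} ∈ I) ↔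
    (∃ A : Set ℕ, A ∉ I ∧ Summable (A.indicator fun n : ℕ => 1 / (n : ℝ))) := by
  constructor
  · rintro ⟨f, hf⟩
    push_neg at hf
    obtain ⟨ε, hε, hA⟩ := hf
    refine ⟨{n : ℕ | ε ≤ |(n : ℝ) * f n|}, hA, ?_⟩
    have hsum : Summable (fun n => ‖(f : ∀ _ : ℕ, ℝ) n‖) := by
      have h := lp.memℓp f
      rw [memℓp_gen_iff (p := 1) (by norm_num)] at h
      simpa using h
    apply Summable.of_nonneg_of_le _ _ (hsum.mul_left (1/ε))
    · intro n
      by_cases hn : n ∈ {n : ℕ | ε ≤ |(n : ℝ) * f n|} <;>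
        simp [Set.indicator, hn] <;> positivity
    · intro n
      by_cases hn : n ∈ {n : ℕ | ε ≤ |(n : ℝ) * f n|}
      · rw [Set.indicator_of_mem hn]
        have hε' : ε ≤ (n : ℝ) * |f n| := by
          have := hn
          simp only [Set.mem_setOf_eq] at this
          rwa [abs_mul, abs_of_nonneg (by positivity : (0:ℝ) ≤ (n:ℝ))] at this
        have hn0 : n ≠ 0 := by
          rintro rfl
          simp at hε'
          linarith
        have hnpos : (0:ℝ) < n := by positivity
        have hnorm : ‖(f : ∀ _ : ℕ, ℝ) n‖ = |f n| := rfl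
        rw [hnorm, div_le_iff₀ hnpos, one_div]
        nlinarith [mul_le_mul_of_nonneg_left hε' (le_of_lt (inv_pos.2 hε)),
          inv_mul_cancel₀ (ne_of_gt hε)]
      · rw [Set.indicator_of_notMem hn]
        positivity
  · rintro ⟨A, hAI, hAsum⟩
    set g : ℕ → ℝ := A.indicator fun n : ℕ => 1 / (n : ℝ) with hg
    have hmem : Memℓp g 1 := by
      apply memℓp_gen
      simp only [ENNReal.toReal_one, Real.rpow_one, Real.norm_eq_abs]
      exact hAsum.abs
    refine ⟨⟨g, hmem⟩, ?_⟩
    intro h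
    have h1 := h 1 one_pos
    have hsubset : A \ {0} ⊆ {n : ℕ | 1 ≤ |(n : ℝ) * g n|} := by
      rintro n ⟨hnA, hn0⟩
      have hn0' : (n : ℝ) ≠ 0 := Nat.cast_ne_zero.2 hn0
      simp only [Set.mem_setOf_eq, hg, Set.indicator_of_mem hnA]
      rw [mul_one_div, div_self hn0', abs_one]
    have : A \ {0} ∈ I := hsub _ _ hsubset h1
    exact hAI (hsub A ((A \ {0}) ∪ {0}) (by intro n hn; by_cases h0 : n = 0 <;> simp [h0, hn])
      (hunion _ _ this (hfin _ (Set.finite_singleton 0))))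
end

section
/- Let I be an ideal on ℕ. If there exists a set A ∉ I with ∑_{n∈A} 1/n < ∞, then the set AOS(I) ∪ {0}, where AOS(I) = {(a_n) ∈ ℓ₁ : (n·a_n) does not I-converge to 0}, contains a vector subspace of ℓ₁ of dimension continuum. -/
open Filter Set Topology

lemma exists_weight (a : ℕ → ℝ) (h0 : ∀ n, 0 ≤ a n) (hS : Summable a) :
    ∃ w : ℕ → ℝ, (∀ n, 1 ≤ w n) ∧ Tendsto w atTop atTop ∧ Summable (fun n => a n * w n) := by
  classical
  set R : ℕ → ℝ := fun n => (∑' k, a (k + n)) + (1/2 : ℝ)^n with hRdef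
  have hRpos : ∀ n, 0 < R n := by
    intro n
    have h1 : (0:ℝ) ≤ ∑' k, a (k + n) := tsum_nonneg (fun k => h0 _)
    have h2 : (0:ℝ) < (1/2:ℝ)^n := by positivity
    simp only [hRdef]
    linarith
  have hstep : ∀ n, a n + R (n+1) ≤ R n := by
    intro n
    have hsum : Summable (fun k => a (k + n)) := (summable_nat_add_iff n).2 hS
    have h1 : (∑' k, a (k + n)) = a n + ∑' k, a (k + (n+1)) := by
      rw [Summable.tsum_eq_zero_add hsum]
      congr 1
      · simp
      · apply tsum_congr; intro k; congr 1; omega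
    have h2 : (1/2:ℝ)^(n+1) ≤ (1/2:ℝ)^n := by
      apply pow_le_pow_of_le_one <;> norm_num
    simp only [hRdef]
    rw [h1]
    linarith
  have hmono : ∀ n, R (n+1) ≤ R n := fun n => le_trans (by linarith [h0 n]) (hstep n)
  have hR0 : Tendsto R atTop (𝓝 0) := by
    have h1 : Tendsto (fun n => ∑' k, a (k + n)) atTop (𝓝 0) := tendsto_sum_nat_add a
    have h2 : Tendsto (fun n : ℕ => (1/2:ℝ)^n) atTop (𝓝 0) := by
      apply tendsto_pow_atTop_nhds_zero_of_lt_one <;> norm_num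
    have := h1.add h2
    simp only [hRdef]
    simpa using this
  refine ⟨fun n => max 1 (Real.sqrt (R n))⁻¹, fun n => le_max_left _ _, ?_, ?_⟩
  · apply tendsto_atTop_mono (fun n => le_max_right 1 (Real.sqrt (R n))⁻¹)
    apply Filter.Tendsto.inv_tendsto_nhdsGT_zero
    apply tendsto_nhdsWithin_of_tendsto_nhds_of_eventually_within
    · exact (Real.continuous_sqrt.tendsto' 0 0 Real.sqrt_zero).comp hR0
    · exact Eventually.of_forall (fun n => Real.sqrt_pos.2 (hRpos n))
  · have hsq : ∀ n, 0 < Real.sqrt (R n) := fun n => Real.sqrt_pos.2 (hRpos n)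
    have hbound : ∀ n, a n * max 1 (Real.sqrt (R n))⁻¹ ≤
        a n + 2 * (Real.sqrt (R n) - Real.sqrt (R (n+1))) := by
      intro n
      have h1 : max 1 (Real.sqrt (R n))⁻¹ ≤ 1 + (Real.sqrt (R n))⁻¹ := by
        apply max_le
        · nlinarith [inv_nonneg.2 (hsq n).le]
        · nlinarith
      have h2 : a n * max 1 (Real.sqrt (R n))⁻¹ ≤ a n * (1 + (Real.sqrt (R n))⁻¹) :=
        mul_le_mul_of_nonneg_left h1 (h0 n)
      have h3 : a n * (Real.sqrt (R n))⁻¹ ≤ 2 * (Real.sqrt (R n) - Real.sqrt (R (n+1))) := by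
        rw [← div_eq_mul_inv, div_le_iff₀ (hsq n)]
        have e1 : Real.sqrt (R n) * Real.sqrt (R n) = R n := Real.mul_self_sqrt (hRpos n).le
        have e2 : Real.sqrt (R (n+1)) * Real.sqrt (R (n+1)) = R (n+1) :=
          Real.mul_self_sqrt (hRpos (n+1)).le
        have e3 : Real.sqrt (R (n+1)) ≤ Real.sqrt (R n) := Real.sqrt_le_sqrt (hmono n)
        nlinarith [hstep n, hsq (n+1)]
      nlinarith
    apply Summable.of_nonneg_of_le (fun n => mul_nonneg (h0 n) (le_trans zero_le_one (le_max_left _ _))) hbound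
    apply hS.add
    have hterm : ∀ n, 0 ≤ 2 * (Real.sqrt (R n) - Real.sqrt (R (n+1))) := by
      intro n
      have := Real.sqrt_le_sqrt (hmono n)
      linarith
    apply summable_of_sum_range_le hterm
    intro n
    have : ∑ i ∈ Finset.range n, (Real.sqrt (R i) - Real.sqrt (R (i+1)))
        = Real.sqrt (R 0) - Real.sqrt (R n) := by
      exact Finset.sum_range_sub' (fun i => Real.sqrt (R i)) n
    calc ∑ i ∈ Finset.range n, 2 * (Real.sqrt (R i) - Real.sqrt (R (i+1)))
        = 2 * (Real.sqrt (R 0) - Real.sqrt (R n)) := by rw [← Finset.mul_sum, this]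
      _ ≤ 2 * Real.sqrt (R 0) := by nlinarith [Real.sqrt_nonneg (R n)]


lemma expsum_eventually_one_le (s : Finset ℝ) (c : ℝ → ℝ) (hpos : ∀ t ∈ s, 0 < t)
    (hne : ∃ t ∈ s, c t ≠ 0) : ∀ᶠ x : ℝ in atTop, 1 ≤ |∑ t ∈ s, c t * x ^ t| := by
  classical
  set s' : Finset ℝ := s.filter (fun t => c t ≠ 0) with hs'
  have hs'ne : s'.Nonempty := by
    obtain ⟨t, hts, hct⟩ := hne
    exact ⟨t, Finset.mem_filter.2 ⟨hts, hct⟩⟩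
  set T : ℝ := s'.max' hs'ne with hT
  have hTs' : T ∈ s' := s'.max'_mem hs'ne
  have hTs : T ∈ s := (Finset.mem_filter.1 hTs').1
  have hcT : c T ≠ 0 := (Finset.mem_filter.1 hTs').2
  have hTpos : 0 < T := hpos T hTs
  have hsum_eq : ∀ x : ℝ, ∑ t ∈ s, c t * x ^ t = ∑ t ∈ s', c t * x ^ t := by
    intro x
    rw [hs', Finset.sum_filter_of_ne]
    intro t _ h hc
    exact h (by rw [hc, zero_mul])
  -- h x := ∑ t in s', c t * x ^ (t - T) tends to c T
  have hhtend : Tendsto (fun x : ℝ => ∑ t ∈ s', c t * x ^ (t - T)) atTop (𝓝 (c T)) := by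
    have : Tendsto (fun x : ℝ => ∑ t ∈ s', c t * x ^ (t - T)) atTop
        (𝓝 (∑ t ∈ s', if t = T then c T else 0)) := by
      apply tendsto_finset_sum
      intro t hts'
      by_cases ht : t = T
      · simp only [ht, if_pos rfl, sub_self]
        have hc : ∀ᶠ x : ℝ in atTop, c T * x ^ (0:ℝ) = c T := by
          filter_upwards [eventually_gt_atTop 0] with x hx
          rw [Real.rpow_zero, mul_one]
        exact Tendsto.congr' (hc.mono fun x h => h.symm) tendsto_const_nhds
      · simp only [if_neg ht]
        have htT : t < T := lt_of_le_of_ne (s'.le_max' t hts') ht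
        have : Tendsto (fun x : ℝ => x ^ (-(T - t))) atTop (𝓝 0) :=
          tendsto_rpow_neg_atTop (by linarith)
        have h2 : Tendsto (fun x : ℝ => c t * x ^ (t - T)) atTop (𝓝 (c t * 0)) := by
          apply Tendsto.const_mul
          convert this using 2 with x
          ring_nf
        simpa using h2
    simpa [Finset.sum_ite_eq' s' T (fun _ => c T), hTs'] using this
  have habs : Tendsto (fun x : ℝ => |∑ t ∈ s', c t * x ^ (t - T)|) atTop (𝓝 |c T|) :=
    hhtend.abs
  have hev1 : ∀ᶠ x : ℝ in atTop, |c T| / 2 ≤ |∑ t ∈ s', c t * x ^ (t - T)| := by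
    have : |c T| / 2 < |c T| := by
      have := abs_pos.2 hcT; linarith
    exact habs.eventually_const_le this
  have hev2 : ∀ᶠ x : ℝ in atTop, 2 / |c T| ≤ x ^ T :=
    (tendsto_rpow_atTop hTpos).eventually_ge_atTop _
  filter_upwards [hev1, hev2, eventually_gt_atTop (0:ℝ)] with x h1 h2 hx
  rw [hsum_eq]
  have hfac : ∑ t ∈ s', c t * x ^ t = x ^ T * ∑ t ∈ s', c t * x ^ (t - T) := by
    rw [Finset.mul_sum]
    apply Finset.sum_congr rfl
    intro t _
    have hxx : x ^ T * x ^ (t - T) = x ^ t := by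
      rw [← Real.rpow_add hx]; ring_nf
    rw [mul_left_comm, hxx]
  rw [hfac, abs_mul, abs_of_pos (Real.rpow_pos_of_pos hx T)]
  have hcTpos : 0 < |c T| := abs_pos.2 hcT
  calc (1:ℝ) = (2 / |c T|) * (|c T| / 2) := by field_simp
    _ ≤ x ^ T * |∑ t ∈ s', c t * x ^ (t - T)| := by
        apply mul_le_mul h2 h1 (by positivity)
        exact (Real.rpow_pos_of_pos hx T).le

/-- Evaluation at a coordinate as a linear map on `ℓ¹`. -/
def lpEval (n : ℕ) : lp (fun _ : ℕ => ℝ) 1 →ₗ[ℝ] ℝ where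
  toFun f := f n
  map_add' f g := by simp [lp.coeFn_add]
  map_smul' r f := by simp [lp.coeFn_smul]

/-- If some `A ∉ I` has `∑_{n ∈ A} 1/n < ∞`, then
`AOS(I) = {(a n) ∈ ℓ₁ : (n * a n) does not I-converge to 0}` is `𝔠`-lineable: `AOS(I) ∪ {0}`
contains a linear subspace of `ℓ₁` of dimension continuum. -/
theorem AOS_lineable (I : Set (Set ℕ))
    (hfin : ∀ A : Set ℕ, A.Finite → A ∈ I)
    (hsub : ∀ A B : Set ℕ, A ⊆ B → B ∈ I → A ∈ I)
    (hunion : ∀ A B : Set ℕ, A ∈ I → B ∈ I → A ∪ B ∈ I)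
    (huniv : (Set.univ : Set ℕ) ∉ I)
    (h : ∃ A : Set ℕ, A ∉ I ∧ Summable (A.indicator fun n : ℕ => 1 / (n : ℝ))) :
    ∃ S : Submodule ℝ (lp (fun _ : ℕ => ℝ) 1),
      Module.rank ℝ S = Cardinal.continuum ∧
      ∀ f ∈ S, f ≠ 0 → ¬ ∀ ε > (0 : ℝ), {n : ℕ | ε ≤ |(n : ℝ) * f n|} ∈ I := by
  classical
  obtain ⟨A, hAI, hAsum⟩ := h
  have hAinf : A.Infinite := fun hF => hAI (hfin A hF)
  set a : ℕ → ℝ := A.indicator (fun n : ℕ => 1 / (n : ℝ)) with ha_def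
  have ha0 : ∀ n, 0 ≤ a n := fun n => Set.indicator_nonneg (fun m _ => by positivity) n
  obtain ⟨w, hw1, hwtop, hws⟩ := exists_weight a ha0 hAsum
  have hwpos : ∀ n, 0 < w n := fun n => lt_of_lt_of_le one_pos (hw1 n)
  set ff : ↥(Set.Ioo (0:ℝ) 1) → ℕ → ℝ :=
    fun t => A.indicator (fun n : ℕ => w n ^ (t:ℝ) / (n : ℝ)) with hff_def
  have hffbound : ∀ (t : ↥(Set.Ioo (0:ℝ) 1)) (n : ℕ), |ff t n| ≤ a n * w n := by
    intro t n
    by_cases hnA : n ∈ A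
    · rw [hff_def]
      simp only [Set.indicator_of_mem hnA, ha_def]
      have h1 : 0 ≤ w n ^ (t:ℝ) / (n:ℝ) :=
        div_nonneg (Real.rpow_nonneg (hwpos n).le _) (Nat.cast_nonneg n)
      rw [abs_of_nonneg h1]
      rcases Nat.eq_zero_or_pos n with hn | hn
      · simp [hn]
      · have hn' : (0:ℝ) < (n:ℝ) := by exact_mod_cast hn
        have h2 : w n ^ (t:ℝ) ≤ w n := by
          calc w n ^ (t:ℝ) ≤ w n ^ (1:ℝ) :=
                Real.rpow_le_rpow_of_exponent_le (hw1 n) (le_of_lt t.2.2)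
            _ = w n := Real.rpow_one _
        calc w n ^ (t:ℝ) / (n:ℝ) ≤ w n / (n:ℝ) := by gcongr
          _ = 1 / (n:ℝ) * w n := by ring
    · rw [hff_def]
      simp only [Set.indicator_of_notMem hnA, ha_def]
      simp
  have hmem : ∀ t : ↥(Set.Ioo (0:ℝ) 1), Memℓp (ff t) 1 := by
    intro t
    apply memℓp_gen
    have hS : Summable fun n => a n * w n := hws
    have : Summable fun n => |ff t n| :=
      Summable.of_nonneg_of_le (fun n => abs_nonneg _) (hffbound t) hS
    simpa [Real.norm_eq_abs, Real.rpow_one] using this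
  set F : ↥(Set.Ioo (0:ℝ) 1) → lp (fun _ : ℕ => ℝ) 1 := fun t => ⟨ff t, hmem t⟩ with hF_def
  have hFapp : ∀ (t : ↥(Set.Ioo (0:ℝ) 1)) (n : ℕ), (F t : ∀ _ : ℕ, ℝ) n = ff t n :=
    fun t n => rfl
  -- coordinate of a finite combination
  have hcoord : ∀ (c : ↥(Set.Ioo (0:ℝ) 1) →₀ ℝ) (n : ℕ),
      ((c.sum fun t r => r • F t : lp (fun _ : ℕ => ℝ) 1) : ∀ _ : ℕ, ℝ) n
        = ∑ t ∈ c.support, c t * ff t n := by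
    intro c n
    have h1 := map_finsuppSum (lpEval n) c (fun t r => r • F t)
    have h2 : ∀ (t : ↥(Set.Ioo (0:ℝ) 1)) (r : ℝ), lpEval n (r • F t) = r * ff t n := by
      intro t r
      show ((r • F t : lp (fun _ : ℕ => ℝ) 1) : ∀ _ : ℕ, ℝ) n = r * ff t n
      rw [lp.coeFn_smul]
      simp [hFapp]
    calc ((c.sum fun t r => r • F t : lp (fun _ : ℕ => ℝ) 1) : ∀ _ : ℕ, ℝ) n
        = lpEval n (c.sum fun t r => r • F t) := rfl
      _ = c.sum fun t r => lpEval n (r • F t) := h1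
      _ = ∑ t ∈ c.support, c t * ff t n := by
          rw [Finsupp.sum]
          exact Finset.sum_congr rfl fun t ht => h2 t (c t)
  -- the key estimate
  have key : ∀ c : ↥(Set.Ioo (0:ℝ) 1) →₀ ℝ, c ≠ 0 →
      ∀ᶠ n : ℕ in atTop, n ∈ A →
        (1:ℝ) ≤ |(n:ℝ) * ((c.sum fun t r => r • F t : lp (fun _ : ℕ => ℝ) 1) : ∀ _ : ℕ, ℝ) n| := by
    intro c hc
    set s : Finset ℝ := c.support.image Subtype.val with hs_def
    set C : ℝ → ℝ := fun u => if hu : u ∈ Set.Ioo (0:ℝ) 1 then c ⟨u, hu⟩ else 0 with hC_def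
    have hCval : ∀ t : ↥(Set.Ioo (0:ℝ) 1), C (t:ℝ) = c t := by
      intro t
      rw [hC_def]
      simp only [dif_pos t.2]
    have hpos : ∀ u ∈ s, 0 < u := by
      intro u hu
      obtain ⟨t, _, rfl⟩ := Finset.mem_image.1 hu
      exact t.2.1
    have hne : ∃ u ∈ s, C u ≠ 0 := by
      obtain ⟨t, ht⟩ := Finsupp.support_nonempty_iff.2 hc
      refine ⟨(t:ℝ), Finset.mem_image_of_mem _ ht, ?_⟩
      rw [hCval t]
      exact Finsupp.mem_support_iff.1 ht
    have himg : ∀ x : ℝ, ∑ u ∈ s, C u * x ^ u = ∑ t ∈ c.support, c t * x ^ (t:ℝ) := by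
      intro x
      rw [hs_def, Finset.sum_image (fun t _ t' _ h => Subtype.val_injective h)]
      exact Finset.sum_congr rfl fun t _ => by rw [hCval t]
    have hev := hwtop.eventually (expsum_eventually_one_le s C hpos hne)
    filter_upwards [hev, eventually_ge_atTop 1] with n hn hn1 hnA
    have hn' : (0:ℝ) < (n:ℝ) := by exact_mod_cast hn1
    have e1 : ((c.sum fun t r => r • F t : lp (fun _ : ℕ => ℝ) 1) : ∀ _ : ℕ, ℝ) n
        = ∑ t ∈ c.support, c t * (w n ^ (t:ℝ) / (n:ℝ)) := by
      rw [hcoord c n]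
      refine Finset.sum_congr rfl fun t _ => ?_
      rw [hff_def]
      simp only [Set.indicator_of_mem hnA]
    rw [e1, Finset.mul_sum]
    have e2 : ∑ t ∈ c.support, (n:ℝ) * (c t * (w n ^ (t:ℝ) / (n:ℝ)))
        = ∑ t ∈ c.support, c t * w n ^ (t:ℝ) := by
      refine Finset.sum_congr rfl fun t _ => ?_
      field_simp
    rw [e2, ← himg (w n)]
    exact hn
  -- linear independence
  have hli : LinearIndependent ℝ F := by
    rw [linearIndependent_iff]
    intro l hl
    by_contra hl0
    obtain ⟨N, hN⟩ := eventually_atTop.1 (key l hl0)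
    obtain ⟨n, hnA, hnN⟩ := hAinf.exists_gt N
    have h1 := hN n (le_of_lt hnN) hnA
    rw [Finsupp.linearCombination_apply] at hl
    rw [hl] at h1
    rw [lp.coeFn_zero] at h1
    simp at h1
    exact absurd h1 (by norm_num)
  refine ⟨Submodule.span ℝ (Set.range F), ?_, ?_⟩
  · rw [rank_span hli, Cardinal.mk_range_eq F hli.injective]
    exact Cardinal.mk_Ioo_real zero_lt_one
  · intro f hf hf0 Hcon
    obtain ⟨c, hc⟩ := Finsupp.mem_span_range_iff_exists_finsupp.1 hf
    have hcne : c ≠ 0 := by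
      rintro rfl
      apply hf0
      rw [← hc]
      simp
    obtain ⟨N, hN⟩ := eventually_atTop.1 (key c hcne)
    have hX : {n : ℕ | 1 ≤ |(n:ℝ) * f n|} ∈ I := Hcon 1 one_pos
    have hsubA : A ⊆ {n : ℕ | 1 ≤ |(n:ℝ) * f n|} ∪ Set.Iio N := by
      intro n hnA
      by_cases hnN : N ≤ n
      · left
        have h1 := hN n hnN hnA
        rw [hc] at h1
        exact h1
      · right
        exact Set.mem_Iio.2 (lt_of_not_ge hnN)
    exact hAI (hsub A _ hsubA (hunion _ _ hX (hfin _ (Set.finite_Iio N))))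
end

section
/- Let I be an ideal on ℕ such that for every C ∉ I there exist two disjoint subsets of C both not in I. If AOS(I) = {(a_n) ∈ ℓ₁ : (n·a_n) does not I-converge to 0} is nonempty, then AOS(I) ∪ {0} contains an infinite-dimensional closed linear subspace of ℓ₁ (i.e., AOS(I) is spaceable). -/
/-!
Pick `f ∈ ℓ₁` and `ε > 0` with `C = {n | ε ≤ |n f(n)|} ∉ I`. Splitting `C` repeatedly gives
pairwise disjoint sets `D k ⊆ C` outside `I`. The vectors of `ℓ₁` that vanish off `⋃ k, D k` and
are a scalar multiple of `f` on each `D k` form a closed subspace; it contains the linearly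
independent restrictions of `f` to the `D k`, and a nonzero element equals `c • f` with `c ≠ 0` on
some `D k`, so `|n x(n)| ≥ |c| ε` on a set outside `I`.
-/

open Function Set

theorem exists_pairwise_disjoint_subsets_notMem {α : Type*} (I : Set (Set α))
    (hsplit : ∀ C : Set α, C ∉ I →
      ∃ A B : Set α, A ⊆ C ∧ B ⊆ C ∧ Disjoint A B ∧ A ∉ I ∧ B ∉ I)
    {C : Set α} (hC : C ∉ I) :
    ∃ D : ℕ → Set α, (∀ k, D k ⊆ C) ∧ (∀ k, D k ∉ I) ∧ Pairwise (Disjoint on D) := by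
  choose A B hAC hBC hAB hAI hBI using hsplit
  let R : ℕ → {s : Set α // s ∉ I} :=
    fun k => Nat.rec ⟨C, hC⟩ (fun _ s => ⟨B s.1 s.2, hBI _ _⟩) k
  have hR : Antitone fun k => (R k).1 := antitone_nat_of_succ_le fun _ => hBC _ _
  refine ⟨fun k => A (R k).1 (R k).2, fun k => (hAC _ _).trans (hR k.zero_le),
    fun k => hAI _ _, (pairwise_disjoint_on _).2 fun j k hjk => ?_⟩
  exact (hAB _ _).mono_right ((hAC _ _).trans (hR hjk))

section BlockMultiples

variable {α ι 𝕜 : Type*} [NormedField 𝕜] {p : ENNReal}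

noncomputable def lpIndicator (s : Set α) (x : lp (fun _ : α => 𝕜) p) : lp (fun _ : α => 𝕜) p :=
  ⟨s.indicator x, (lp.memℓp x).mono' fun n => norm_indicator_le_norm_self _ n⟩

@[simp]
theorem lpIndicator_apply (s : Set α) (x : lp (fun _ : α => 𝕜) p) (n : α) :
    lpIndicator s x n = s.indicator x n :=
  rfl

variable (p) in
def blockMultiples (f : α → 𝕜) (D : ι → Set α) : Submodule 𝕜 (lp (fun _ : α => 𝕜) p) where
  carrier := {x | (∀ n ∉ ⋃ k, D k, x n = 0) ∧ ∀ k, ∀ n ∈ D k, ∀ m ∈ D k, x n * f m = x m * f n}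
  add_mem' := by
    rintro x y ⟨hx₀, hx⟩ ⟨hy₀, hy⟩
    refine ⟨fun n hn => by simp [hx₀ n hn, hy₀ n hn], fun k n hn m hm => ?_⟩
    simp only [lp.coeFn_add, Pi.add_apply, add_mul, hx k n hn m hm, hy k n hn m hm]
  zero_mem' := by simp
  smul_mem' := by
    rintro c x ⟨hx₀, hx⟩
    refine ⟨fun n hn => by simp [hx₀ n hn], fun k n hn m hm => ?_⟩
    simp only [lp.coeFn_smul, Pi.smul_apply, smul_eq_mul, mul_assoc, hx k n hn m hm]

theorem isClosed_blockMultiples [Fact (1 ≤ p)] (f : α → 𝕜) (D : ι → Set α) :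
    IsClosed (blockMultiples p f D : Set (lp (fun _ : α => 𝕜) p)) := by
  have hcont (n : α) : Continuous fun x : lp (fun _ : α => 𝕜) p => x n :=
    (lp.lipschitzWith_one_eval p n).continuous
  simp only [blockMultiples, Submodule.coe_set_mk, AddSubmonoid.coe_set_mk,
    AddSubsemigroup.coe_set_mk, ofPred_and, ofPred_forall]
  refine .inter (isClosed_iInter fun n => isClosed_iInter fun _ => ?_)
    (isClosed_iInter fun k => isClosed_iInter fun n => isClosed_iInter fun _ =>
      isClosed_iInter fun m => isClosed_iInter fun _ => ?_)
  · exact isClosed_eq (hcont n) continuous_const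
  · exact isClosed_eq ((hcont n).mul continuous_const) ((hcont m).mul continuous_const)

theorem lpIndicator_mem_blockMultiples (f : lp (fun _ : α => 𝕜) p) {D : ι → Set α}
    (hD : Pairwise (Disjoint on D)) (k : ι) : lpIndicator (D k) f ∈ blockMultiples p f D := by
  classical
  refine ⟨fun n hn => ?_, fun j n hn m hm => ?_⟩
  · simp [indicator_of_notMem fun h => hn (mem_iUnion_of_mem k h)]
  · obtain rfl | hjk := eq_or_ne j k
    · simp [indicator_of_mem hn, indicator_of_mem hm, mul_comm]
    · simp [indicator_of_notMem ((hD hjk).notMem_of_mem_left hn),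
        indicator_of_notMem ((hD hjk).notMem_of_mem_left hm)]

theorem linearIndependent_lpIndicator (f : lp (fun _ : α => 𝕜) p) {D : ι → Set α}
    (hD : Pairwise (Disjoint on D)) (hf : ∀ k, ∃ n ∈ D k, f n ≠ 0) :
    LinearIndependent 𝕜 fun k => lpIndicator (D k) f := by
  choose n hn hfn using hf
  refine .of_pairwise_dual_eq_zero_one _ (fun k => (f (n k))⁻¹ • lp.evalₗ _ p (n k))
    (fun j k hjk => ?_) fun k => ?_
  · simp [indicator_of_notMem ((hD hjk).notMem_of_mem_left (hn j))]
  · simp [indicator_of_mem (hn k), hfn k]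

theorem not_finite_blockMultiples [Infinite ι] (f : lp (fun _ : α => 𝕜) p) {D : ι → Set α}
    (hD : Pairwise (Disjoint on D)) (hf : ∀ k, ∃ n ∈ D k, f n ≠ 0) :
    ¬ Module.Finite 𝕜 (blockMultiples p f D) := by
  intro _
  let v (k : ι) : blockMultiples p f D :=
    ⟨lpIndicator (D k) f, lpIndicator_mem_blockMultiples f hD k⟩
  exact Module.Finite.not_linearIndependent_of_infinite v
    (.of_comp (blockMultiples p f D).subtype (linearIndependent_lpIndicator f hD hf))

theorem exists_eq_smul_on_block_of_mem_blockMultiples {f : α → 𝕜} {D : ι → Set α}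
    (hf : ∀ k, ∀ n ∈ D k, f n ≠ 0) {x : lp (fun _ : α => 𝕜) p}
    (hx : x ∈ blockMultiples p f D) (hx₀ : x ≠ 0) :
    ∃ k, ∃ c : 𝕜, c ≠ 0 ∧ ∀ m ∈ D k, x m = c * f m := by
  obtain ⟨n, hn⟩ : ∃ n, x n ≠ 0 := by
    by_contra! h
    exact hx₀ (lp.ext (funext h))
  obtain ⟨k, hnk⟩ := mem_iUnion.1 (not_imp_comm.1 (hx.1 n) hn)
  refine ⟨k, x n / f n, div_ne_zero hn (hf k n hnk), fun m hm => ?_⟩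
  rw [div_mul_eq_mul_div, hx.2 k n hnk m hm, mul_div_cancel_right₀ _ (hf k n hnk)]

end BlockMultiples

theorem AOS_spaceable_general (I : Set (Set ℕ))
    (hfin : ∀ A : Set ℕ, A.Finite → A ∈ I)
    (hsub : ∀ A B : Set ℕ, A ⊆ B → B ∈ I → A ∈ I)
    (hsplit : ∀ C : Set ℕ, C ∉ I →
      ∃ A B : Set ℕ, A ⊆ C ∧ B ⊆ C ∧ Disjoint A B ∧ A ∉ I ∧ B ∉ I)
    (hne : ∃ f : lp (fun _ : ℕ => ℝ) 1,
      ¬ ∀ ε > (0 : ℝ), {n : ℕ | ε ≤ |(n : ℝ) * f n|} ∈ I) :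
    ∃ S : Submodule ℝ (lp (fun _ : ℕ => ℝ) 1),
      IsClosed (S : Set (lp (fun _ : ℕ => ℝ) 1)) ∧
      ¬ Module.Finite ℝ S ∧
      ∀ f ∈ S, f ≠ 0 → ¬ ∀ ε > (0 : ℝ), {n : ℕ | ε ≤ |(n : ℝ) * f n|} ∈ I := by
  obtain ⟨f, hf⟩ := hne
  push Not at hf
  obtain ⟨ε, hε, hC⟩ := hf
  obtain ⟨D, hDC, hDI, hD⟩ := exists_pairwise_disjoint_subsets_notMem I hsplit hC
  have hf_ne (k : ℕ) (n : ℕ) (hn : n ∈ D k) : f n ≠ 0 := fun h => by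
    have hεn : ε ≤ |(n : ℝ) * f n| := hDC k hn
    simp [h] at hεn
    linarith
  have hD_ne (k : ℕ) : (D k).Nonempty :=
    nonempty_iff_ne_empty.2 fun h => hDI k (h ▸ hfin ∅ finite_empty)
  refine ⟨blockMultiples 1 f D, isClosed_blockMultiples _ _,
    not_finite_blockMultiples f hD fun k => (hD_ne k).imp fun n hn => ⟨hn, hf_ne k n hn⟩, ?_⟩
  intro x hx hx₀ hx_conv
  obtain ⟨k, c, hc, hxc⟩ := exists_eq_smul_on_block_of_mem_blockMultiples hf_ne hx hx₀
  refine hDI k (hsub _ _ (fun m hm => ?_) (hx_conv (|c| * ε) (by positivity)))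
  calc |c| * ε ≤ |c| * |(m : ℝ) * f m| := by gcongr; exact hDC k hm
    _ = |(m : ℝ) * x m| := by rw [hxc m hm, ← abs_mul]; ring_nf

/-- If every set `C ∉ I` splits into two disjoint subsets not in `I`, and
`AOS(I) = {(a n) ∈ ℓ₁ : (n * a n) does not I-converge to 0}` is nonempty, then `AOS(I)` is
spaceable: `AOS(I) ∪ {0}` contains a closed infinite-dimensional subspace of `ℓ₁`. -/
theorem AOS_spaceable (I : Set (Set ℕ))
    (hfin : ∀ A : Set ℕ, A.Finite → A ∈ I)
    (hsub : ∀ A B : Set ℕ, A ⊆ B → B ∈ I → A ∈ I)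
    (hunion : ∀ A B : Set ℕ, A ∈ I → B ∈ I → A ∪ B ∈ I)
    (huniv : (Set.univ : Set ℕ) ∉ I)
    (hsplit : ∀ C : Set ℕ, C ∉ I →
      ∃ A B : Set ℕ, A ⊆ C ∧ B ⊆ C ∧ Disjoint A B ∧ A ∉ I ∧ B ∉ I)
    (hne : ∃ f : lp (fun _ : ℕ => ℝ) 1,
      ¬ ∀ ε > (0 : ℝ), {n : ℕ | ε ≤ |(n : ℝ) * f n|} ∈ I) :
    ∃ S : Submodule ℝ (lp (fun _ : ℕ => ℝ) 1),
      IsClosed (S : Set (lp (fun _ : ℕ => ℝ) 1)) ∧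
      ¬ Module.Finite ℝ S ∧
      ∀ f ∈ S, f ≠ 0 → ¬ ∀ ε > (0 : ℝ), {n : ℕ | ε ≤ |(n : ℝ) * f n|} ∈ I :=
  AOS_spaceable_general I hfin hsub hsplit hne
end

section
/- If an ideal I on ℕ is not tall (i.e., there exists an infinite A ⊆ ℕ such that no infinite subset of A belongs to I), then AOS(I) = {(a_n) ∈ ℓ₁ : (n·a_n) does not I-converge to 0} is spaceable: AOS(I) ∪ {0} contains a closed infinite-dimensional subspace of ℓ₁. -/
open Filter Set

private theorem pow23_inj' (k j k' j' : ℕ) (h : 3^k * 2^j = 3^k' * 2^j') :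
    k = k' ∧ j = j' := by
  have e2 : ∀ a b : ℕ, ((3^a * 2^b).factorization) 2 = b := by
    intro a b
    rw [Nat.factorization_mul (pow_ne_zero _ three_ne_zero) (pow_ne_zero _ two_ne_zero)]
    simp [Nat.Prime.factorization_pow, Nat.prime_two, Nat.prime_three, Finsupp.single_apply]
  have e3 : ∀ a b : ℕ, ((3^a * 2^b).factorization) 3 = a := by
    intro a b
    rw [Nat.factorization_mul (pow_ne_zero _ three_ne_zero) (pow_ne_zero _ two_ne_zero)]
    simp [Nat.Prime.factorization_pow, Nat.prime_two, Nat.prime_three, Finsupp.single_apply]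
  have h2 : ((3^k*2^j).factorization) 2 = ((3^k'*2^j').factorization) 2 := by rw [h]
  have h3 : ((3^k*2^j).factorization) 3 = ((3^k'*2^j').factorization) 3 := by rw [h]
  rw [e2 k j, e2 k' j'] at h2
  rw [e3 k j, e3 k' j'] at h3
  exact ⟨h3, h2⟩

/-- Evaluation at a coordinate as a continuous linear map on `ℓ¹`. -/
noncomputable def evalCLM' (n : ℕ) : lp (fun _ : ℕ => ℝ) 1 →L[ℝ] ℝ :=
  LinearMap.mkContinuous
    { toFun := fun f => f n
      map_add' := fun f g => congrFun (lp.coeFn_add f g) n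
      map_smul' := fun c f => congrFun (lp.coeFn_smul c f) n }
    1 (fun f => by simpa using lp.norm_apply_le_norm one_ne_zero f n)

theorem evalCLM'_apply (n : ℕ) (f : lp (fun _ : ℕ => ℝ) 1) : evalCLM' n f = f n := rfl

/-- The candidate subspace: sequences supported on `⋃ k, range (b k)` such that
`n * f n` is constant on each `range (b k)`. -/
noncomputable def Sx (b : ℕ → ℕ → ℕ) : Submodule ℝ (lp (fun _ : ℕ => ℝ) 1) where
  carrier := {f | (∀ n ∉ ⋃ k, Set.range (b k), f n = 0) ∧
    ∀ k j j', (b k j : ℝ) * f (b k j) = (b k j' : ℝ) * f (b k j')}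
  zero_mem' := by
    constructor
    · intro n _; simp
    · intro k j j'; simp
  add_mem' := by
    rintro f g ⟨hf1, hf2⟩ ⟨hg1, hg2⟩
    constructor
    · intro n hn
      have : (↑(f + g) : ℕ → ℝ) n = f n + g n := congrFun (lp.coeFn_add f g) n
      rw [this, hf1 n hn, hg1 n hn, add_zero]
    · intro k j j'
      have h1 : (↑(f + g) : ℕ → ℝ) (b k j) = f (b k j) + g (b k j) :=
        congrFun (lp.coeFn_add f g) _
      have h2 : (↑(f + g) : ℕ → ℝ) (b k j') = f (b k j') + g (b k j') :=
        congrFun (lp.coeFn_add f g) _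
      rw [h1, h2, mul_add, mul_add, hf2 k j j', hg2 k j j']
  smul_mem' := by
    rintro c f ⟨hf1, hf2⟩
    constructor
    · intro n hn
      have : (↑(c • f) : ℕ → ℝ) n = c * f n := congrFun (lp.coeFn_smul c f) n
      rw [this, hf1 n hn, mul_zero]
    · intro k j j'
      have h1 : (↑(c • f) : ℕ → ℝ) (b k j) = c * f (b k j) :=
        congrFun (lp.coeFn_smul c f) _
      have h2 : (↑(c • f) : ℕ → ℝ) (b k j') = c * f (b k j') :=
        congrFun (lp.coeFn_smul c f) _
      rw [h1, h2, mul_left_comm, hf2 k j j', mul_left_comm]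

theorem mem_Sx (b : ℕ → ℕ → ℕ) (f : lp (fun _ : ℕ => ℝ) 1) :
    f ∈ Sx b ↔ (∀ n ∉ ⋃ k, Set.range (b k), f n = 0) ∧
      ∀ k j j', (b k j : ℝ) * f (b k j) = (b k j' : ℝ) * f (b k j') := Iff.rfl

theorem isClosed_Sx (b : ℕ → ℕ → ℕ) :
    IsClosed ((Sx b : Submodule ℝ (lp (fun _ : ℕ => ℝ) 1)) : Set (lp (fun _ : ℕ => ℝ) 1)) := by
  have hset : ((Sx b : Submodule ℝ (lp (fun _ : ℕ => ℝ) 1)) : Set (lp (fun _ : ℕ => ℝ) 1)) =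
      (⋂ n ∈ (⋃ k, Set.range (b k))ᶜ, (evalCLM' n) ⁻¹' {0}) ∩
      (⋂ k, ⋂ j, ⋂ j', {f : lp (fun _ : ℕ => ℝ) 1 |
        (b k j : ℝ) * evalCLM' (b k j) f = (b k j' : ℝ) * evalCLM' (b k j') f}) := by
    ext f
    simp only [SetLike.mem_coe, mem_Sx, Set.mem_inter_iff, Set.mem_iInter,
      Set.mem_preimage, Set.mem_singleton_iff, Set.mem_compl_iff, Set.mem_setOf_eq,
      evalCLM'_apply]
  rw [hset]
  refine IsClosed.inter ?_ ?_
  · exact isClosed_biInter fun n _ => (isClosed_singleton).preimage (evalCLM' n).continuous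
  · refine isClosed_iInter fun k => isClosed_iInter fun j => isClosed_iInter fun j' => ?_
    exact isClosed_eq (by fun_prop) (by fun_prop)

set_option maxHeartbeats 1000000 in
theorem memℓp_indicator (g : ℕ → ℕ) (hinj : Function.Injective g)
    (hg : ∀ j, 2 ^ j ≤ g j) :
    Memℓp (Set.indicator (Set.range g) (fun n => 1 / (n : ℝ))) 1 := by
  apply memℓp_gen
  have hsumm : Summable fun n : ℕ =>
      ‖Set.indicator (Set.range g) (fun m => 1 / (m : ℝ)) n‖ := by
    rw [← Function.Injective.summable_iff hinj
      (by intro x hx; simp [Set.indicator_of_notMem hx])]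
    have hle : ∀ j : ℕ, ((fun n : ℕ =>
        ‖Set.indicator (Set.range g) (fun m => 1 / (m : ℝ)) n‖) ∘ g) j ≤ (1 / 2 : ℝ) ^ j := by
      intro j
      have hmem : g j ∈ Set.range g := ⟨j, rfl⟩
      simp only [Function.comp_apply, Set.indicator_of_mem hmem]
      rw [Real.norm_eq_abs, abs_of_nonneg (by positivity), div_pow, one_pow]
      apply div_le_div_of_nonneg_left (by norm_num) (by positivity)
      exact_mod_cast hg j
    exact Summable.of_nonneg_of_le (fun j => norm_nonneg _) hle
      (summable_geometric_of_lt_one (by norm_num) (by norm_num))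
  simpa using hsumm

/-- The basic vector supported on `range g` with value `1/n` at `n`. -/
noncomputable def eV (g : ℕ → ℕ) (hinj : Function.Injective g)
    (hg : ∀ j, 2 ^ j ≤ g j) : lp (fun _ : ℕ => ℝ) 1 :=
  ⟨Set.indicator (Set.range g) (fun n => 1 / (n : ℝ)), memℓp_indicator g hinj hg⟩

theorem eV_apply (g : ℕ → ℕ) (hinj : Function.Injective g) (hg : ∀ j, 2 ^ j ≤ g j) (n : ℕ) :
    (eV g hinj hg : ℕ → ℝ) n = Set.indicator (Set.range g) (fun n => 1 / (n : ℝ)) n := rfl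

/-- If the ideal `I` is not tall (some infinite `A ⊆ ℕ` has no infinite subset in `I`),
then `AOS(I) = {(a n) ∈ ℓ₁ : (n * a n) does not I-converge to 0}` is spaceable:
`AOS(I) ∪ {0}` contains a closed infinite-dimensional subspace of `ℓ₁`. -/
theorem AOS_spaceable_of_not_tall (I : Set (Set ℕ))
    (hfin : ∀ A : Set ℕ, A.Finite → A ∈ I)
    (hsub : ∀ A B : Set ℕ, A ⊆ B → B ∈ I → A ∈ I)
    (hunion : ∀ A B : Set ℕ, A ∈ I → B ∈ I → A ∪ B ∈ I)
    (huniv : (Set.univ : Set ℕ) ∉ I)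
    (hnottall : ∃ A : Set ℕ, A.Infinite ∧ ∀ B ⊆ A, B.Infinite → B ∉ I) :
    ∃ S : Submodule ℝ (lp (fun _ : ℕ => ℝ) 1),
      IsClosed (S : Set (lp (fun _ : ℕ => ℝ) 1)) ∧
      ¬ Module.Finite ℝ S ∧
      ∀ f ∈ S, f ≠ 0 → ¬ ∀ ε > (0 : ℝ), {n : ℕ | ε ≤ |(n : ℝ) * f n|} ∈ I := by
  classical
  obtain ⟨A, hAinf, hA⟩ := hnottall
  have hAinf' : {n | n ∈ A}.Infinite := by simpa using hAinf
  let a : ℕ → ℕ := Nat.nth (· ∈ A)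
  have hamono : StrictMono a := Nat.nth_strictMono hAinf'
  have hamem : ∀ n, a n ∈ A := fun n => Nat.nth_mem_of_infinite hAinf' n
  have hale : ∀ n, n ≤ a n := fun n => hamono.le_apply
  let b : ℕ → ℕ → ℕ := fun k j => a (3 ^ k * 2 ^ j)
  have hbA : ∀ k j, b k j ∈ A := fun k j => hamem _
  have hb2 : ∀ k j, 2 ^ j ≤ b k j := fun k j =>
    le_trans (Nat.le_mul_of_pos_left _ (pow_pos (by norm_num) k)) (hale _)
  have hbpos : ∀ k j, 0 < b k j := fun k j =>
    lt_of_lt_of_le (pow_pos (by norm_num) j) (hb2 k j)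
  have hbinj : ∀ k, Function.Injective (b k) := by
    intro k j j' h
    exact (pow23_inj' k j k j' (hamono.injective h)).2
  have hbcross : ∀ k j k' j', b k j = b k' j' → k = k' ∧ j = j' := by
    intro k j k' j' h
    exact pow23_inj' k j k' j' (hamono.injective h)
  refine ⟨Sx b, isClosed_Sx b, ?_, ?_⟩
  · -- infinite dimensional
    let e : ℕ → lp (fun _ : ℕ => ℝ) 1 := fun k => eV (b k) (hbinj k) (hb2 k)
    have heApply : ∀ k n, (e k : ℕ → ℝ) n =
        Set.indicator (Set.range (b k)) (fun n => 1 / (n : ℝ)) n := fun k n => rfl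
    have heS : ∀ k, e k ∈ Sx b := by
      intro k
      rw [mem_Sx]
      constructor
      · intro n hn
        rw [heApply]
        apply Set.indicator_of_notMem
        intro hmem
        exact hn (Set.mem_iUnion.mpr ⟨k, hmem⟩)
      · intro k' j j'
        rw [heApply, heApply]
        by_cases hk : k' = k
        · subst hk
          have hmj : b k' j ∈ Set.range (b k') := ⟨j, rfl⟩
          have hmj' : b k' j' ∈ Set.range (b k') := ⟨j', rfl⟩
          rw [Set.indicator_of_mem hmj, Set.indicator_of_mem hmj']
          have h1 : (b k' j : ℝ) ≠ 0 := Nat.cast_ne_zero.mpr (hbpos k' j).ne'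
          have h2 : (b k' j' : ℝ) ≠ 0 := Nat.cast_ne_zero.mpr (hbpos k' j').ne'
          field_simp
        · have h1 : b k' j ∉ Set.range (b k) := by
            rintro ⟨i, hi⟩
            exact hk ((hbcross k i k' j hi).1).symm
          have h2 : b k' j' ∉ Set.range (b k) := by
            rintro ⟨i, hi⟩
            exact hk ((hbcross k i k' j' hi).1).symm
          rw [Set.indicator_of_notMem h1, Set.indicator_of_notMem h2, mul_zero, mul_zero]
    have hli : LinearIndependent ℝ (fun k : ℕ => (⟨e k, heS k⟩ : Sx b)) := by
      rw [linearIndependent_iff']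
      intro s g hsum i hi
      let φ : (Sx b) →ₗ[ℝ] ℝ := (evalCLM' (b i 0)).toLinearMap.comp (Sx b).subtype
      have happ : φ (∑ k ∈ s, g k • (⟨e k, heS k⟩ : Sx b)) = 0 := by rw [hsum]; simp
      rw [map_sum] at happ
      have hterm : ∀ k ∈ s, φ (g k • (⟨e k, heS k⟩ : Sx b)) =
          if k = i then g k * (1 / (b i 0 : ℝ)) else 0 := by
        intro k _
        rw [map_smul, smul_eq_mul]
        have hφ : φ (⟨e k, heS k⟩ : Sx b) =
            Set.indicator (Set.range (b k)) (fun n => 1 / (n : ℝ)) (b i 0) := rfl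
        rw [hφ]
        by_cases hk : k = i
        · subst hk
          have hm0 : b k 0 ∈ Set.range (b k) := ⟨0, rfl⟩
          rw [Set.indicator_of_mem hm0, if_pos rfl]
        · rw [if_neg hk]
          have : b i 0 ∉ Set.range (b k) := by
            rintro ⟨x, hx⟩
            exact hk (hbcross k x i 0 hx).1
          rw [Set.indicator_of_notMem this, mul_zero]
      rw [Finset.sum_congr rfl hterm, Finset.sum_ite_eq' s i
        (fun k => g k * (1 / (b i 0 : ℝ))), if_pos hi] at happ
      have hne : (1 / (b i 0 : ℝ)) ≠ 0 := by
        have : (b i 0 : ℝ) ≠ 0 := Nat.cast_ne_zero.mpr (hbpos i 0).ne'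
        simp [this]
      exact (mul_eq_zero.mp happ).resolve_right hne
    intro hfinite
    have h1 : (Cardinal.aleph0 : Cardinal) ≤ Module.rank ℝ (Sx b) := hli.aleph0_le_rank
    have h2 : Module.rank ℝ (Sx b) < Cardinal.aleph0 := Module.rank_lt_aleph0 ℝ (Sx b)
    exact absurd h1 (not_le.mpr h2)
  · -- the AOS property
    intro f hf hfne hall
    rw [mem_Sx] at hf
    obtain ⟨hf1, hf2⟩ := hf
    have hex : ∃ n, f n ≠ 0 := by
      by_contra h
      push_neg at h
      exact hfne (Subtype.ext (funext h))
    obtain ⟨n, hn⟩ := hex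
    have hnB : n ∈ ⋃ k, Set.range (b k) := by
      by_contra h
      exact hn (hf1 n h)
    obtain ⟨Bk, ⟨k, rfl⟩, hmemB⟩ := hnB
    obtain ⟨j, rfl⟩ := hmemB
    have hcne : (b k j : ℝ) * f (b k j) ≠ 0 :=
      mul_ne_zero (Nat.cast_ne_zero.mpr (hbpos k j).ne') hn
    have hεpos : (0 : ℝ) < |(b k j : ℝ) * f (b k j)| := abs_pos.mpr hcne
    have hsubset : Set.range (b k) ⊆
        {n : ℕ | |(b k j : ℝ) * f (b k j)| ≤ |(n : ℝ) * f n|} := by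
      rintro m ⟨j', rfl⟩
      have heq : (b k j : ℝ) * f (b k j) = (b k j' : ℝ) * f (b k j') := hf2 k j j'
      simp [Set.mem_setOf_eq, heq]
    have hrangeI : Set.range (b k) ∉ I := by
      apply hA
      · rintro m ⟨j', rfl⟩; exact hbA k j'
      · exact Set.infinite_range_of_injective (hbinj k)
    exact hrangeI (hsub _ _ hsubset (hall _ hεpos))
end

section
/- Let (a_k) be a sequence of reals tending to infinity and (m_k) an increasing sequence of positive integers with m_k ≥ k^{a_k} for each k, and let I be an ideal on ℕ with M = {m_k : k ∈ ℕ} ∉ I. Then AOS(I) ∪ {0}, where AOS(I) = {(a_n) ∈ ℓ₁ : (n·a_n) does not I-converge to 0}, contains a free subalgebra of ℓ₁ (with coordinatewise multiplication) generated by continuum many free generators; i.e., AOS(I) is strongly 𝔠-algebrable. -/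
/-! Take continuum many `ℚ`-linearly independent reals `r i < -1` and let the generator `x i`
vanish off `M` and equal `k ^ r i` at `m k`. A nonzero polynomial `p` without constant term
evaluates at `m k` to `∑ c_d k ^ ⟨d, r⟩`, a sum of powers of `k` with pairwise distinct exponents
(by linear independence), all `< -1`. The term with the largest exponent `t` dominates, so the
evaluation is `O(k ^ t)`, hence summable, while `m k ≥ k ^ e k` with `e k → ∞` makes
`m k · |p(x)(m k)|` tend to infinity. Then `{n | 1 ≤ |n · p(x)(n)|}` contains all but finitely many
points of `M`, so it cannot lie in `I`. -/

open Filter Set Cardinal Function MvPolynomial Topology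

lemma tendsto_rpow_neg_mul_sum_rpow {α : Type*} {s : Finset α} {t : α → ℝ} (ht : InjOn t s)
    {d₀ : α} (hd₀ : d₀ ∈ s) (hmax : ∀ d ∈ s, t d ≤ t d₀) (c : α → ℝ) :
    Tendsto (fun x : ℝ => x ^ (-t d₀) * ∑ d ∈ s, c d * x ^ t d) atTop (𝓝 (c d₀)) := by
  classical
  have hterm : ∀ d ∈ s, Tendsto (fun x : ℝ => c d * x ^ (t d - t d₀)) atTop
      (𝓝 (if d = d₀ then c d₀ else 0)) := by
    intro d hd
    split_ifs with h
    · subst h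
      simp
    · have hlt : t d < t d₀ := (hmax d hd).lt_of_ne fun h' => h (ht hd hd₀ h')
      simpa using (tendsto_rpow_neg_atTop (sub_pos.2 hlt)).const_mul (c d)
  have hsum := tendsto_finsetSum s hterm
  rw [Finset.sum_ite_eq', if_pos hd₀] at hsum
  refine hsum.congr' ?_
  filter_upwards [eventually_gt_atTop 0] with x hx
  rw [Finset.mul_sum]
  refine Finset.sum_congr rfl fun d _ => ?_
  rw [Real.rpow_sub hx, Real.rpow_neg hx.le]
  ring

lemma tendsto_mul_rpow_atTop_of_rpow_le {e u : ℕ → ℝ} (he : Tendsto e atTop atTop)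
    (hu : ∀ k : ℕ, (k : ℝ) ^ e k ≤ u k) (t : ℝ) :
    Tendsto (fun k : ℕ => u k * (k : ℝ) ^ t) atTop atTop := by
  refine tendsto_atTop_mono' atTop ?_ tendsto_natCast_atTop_atTop
  filter_upwards [he.eventually_ge_atTop (1 - t), eventually_ge_atTop 1] with k hek hk
  have hk' : (1 : ℝ) ≤ k := by exact_mod_cast hk
  calc (k : ℝ) = (k : ℝ) ^ (1 : ℝ) := (Real.rpow_one _).symm
    _ ≤ (k : ℝ) ^ (e k + t) := Real.rpow_le_rpow_of_exponent_le hk' (by linarith)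
    _ = (k : ℝ) ^ e k * (k : ℝ) ^ t := Real.rpow_add (by positivity) _ _
    _ ≤ u k * (k : ℝ) ^ t := mul_le_mul_of_nonneg_right (hu k) (by positivity)

lemma range_mem_of_eventually_mem {α : Type*} {I : Set (Set α)}
    (hfin : ∀ A : Set α, A.Finite → A ∈ I) (hsub : ∀ A B : Set α, A ⊆ B → B ∈ I → A ∈ I)
    (hunion : ∀ A B : Set α, A ∈ I → B ∈ I → A ∪ B ∈ I) {m : ℕ → α} {S : Set α} (hS : S ∈ I)
    (hm : ∀ᶠ k in atTop, m k ∈ S) : range m ∈ I := by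
  obtain ⟨K, hK⟩ := eventually_atTop.1 hm
  refine hsub _ _ ?_ (hunion _ _ hS (hfin _ ((finite_Iio K).image m)))
  rintro _ ⟨k, rfl⟩
  by_cases hk : K ≤ k
  · exact Or.inl (hK k hk)
  · exact Or.inr ⟨k, not_le.1 hk, rfl⟩

lemma exists_rat_ne_zero_mul_lt {x : ℝ} (hx : x ≠ 0) (c : ℝ) :
    ∃ q : ℚ, q ≠ 0 ∧ (q : ℝ) * x < c := by
  obtain ⟨q, hq⟩ : ∃ q : ℚ, (q : ℝ) * x < min c 0 := by
    rcases hx.lt_or_gt with hx | hx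
    · obtain ⟨q, hq⟩ := exists_rat_gt (min c 0 / x)
      exact ⟨q, (div_lt_iff_of_neg hx).mp hq⟩
    · obtain ⟨q, hq⟩ := exists_rat_lt (min c 0 / x)
      exact ⟨q, (lt_div_iff₀ hx).mp hq⟩
  refine ⟨q, ?_, hq.trans_le (min_le_left _ _)⟩
  rintro rfl
  simp at hq

lemma exists_linearIndependent_rat_lt (c : ℝ) :
    ∃ (ι : Type) (r : ι → ℝ), #ι = 𝔠 ∧ LinearIndependent ℚ r ∧ ∀ i, r i < c := by
  obtain ⟨s, ⟨b⟩⟩ := Module.Basis.exists_basis ℚ ℝ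
  choose q hq0 hqc using fun i => exists_rat_ne_zero_mul_lt (b.ne_zero i) c
  refine ⟨s, fun i => (q i : ℝ) * b i, ?_, ?_, hqc⟩
  · rw [b.mk_eq_rank'', Real.rank_rat_real]
  · have hr : (fun i => (q i : ℝ) * b i) = (fun i => Units.mk0 (q i) (hq0 i)) • ⇑b := by
      ext i
      simp [Units.smul_def, Rat.smul_def]
    rw [hr]
    exact b.linearIndependent.units_smul _

lemma Finsupp.linearCombination_lt_of_forall_lt {σ : Type*} {R : σ → ℝ} {a : ℝ} (ha : a ≤ 0)
    (hR : ∀ c, R c < a) {d : σ →₀ ℕ} (hd : d ≠ 0) : linearCombination ℕ R d < a := by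
  classical
  obtain ⟨c, hc⟩ := support_nonempty_iff.2 hd
  have hdc : (1 : ℝ) ≤ d c := by exact_mod_cast Nat.one_le_iff_ne_zero.2 (mem_support_iff.1 hc)
  have hrest : ∑ c' ∈ d.support.erase c, d c' • R c' ≤ 0 :=
    Finset.sum_nonpos fun c' _ => by
      rw [nsmul_eq_mul]; exact mul_nonpos_of_nonneg_of_nonpos (by positivity) ((hR c').le.trans ha)
  rw [linearCombination_apply, Finsupp.sum, ← Finset.add_sum_erase _ _ hc, nsmul_eq_mul]
  nlinarith [hR c]

namespace MvPolynomial

section CommSemiring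

variable {R σ β : Type*} [CommSemiring R]

lemma aeval_pi_apply_eq_eval (v : σ → β → R) (p : MvPolynomial σ R) (n : β) :
    aeval v p n = eval (fun c => v c n) p := by
  simpa using comp_aeval_apply (f := v) (Pi.evalAlgHom R (fun _ => R) n) p

lemma aeval_extend_zero {α : Type*} {p : MvPolynomial σ R} (hp : constantCoeff p = 0)
    (m : α → β) (u : σ → α → R) :
    aeval (fun c => extend m (u c) 0) p = extend m (fun k => eval (fun c => u c k) p) 0 := by
  classical
  ext n
  rw [aeval_pi_apply_eq_eval]
  by_cases hn : ∃ k, m k = n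
  · simp only [extend_def, dif_pos hn]
  · simp only [extend_apply' _ _ _ hn, Pi.zero_apply, eval_zero', hp]

end CommSemiring

variable {σ : Type*}

lemma eval_rpow (p : MvPolynomial σ ℝ) (r : σ → ℝ) {x : ℝ} (hx : 0 < x) :
    eval (fun c => x ^ r c) p
      = ∑ d ∈ p.support, coeff d p * x ^ Finsupp.linearCombination ℕ r d := by
  rw [eval_eq]
  refine Finset.sum_congr rfl fun d _ => ?_
  rw [Finsupp.linearCombination_apply, Finsupp.sum, Real.rpow_sum_of_pos hx]
  congr 1
  refine Finset.prod_congr rfl fun c _ => ?_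
  rw [← Real.rpow_natCast, ← Real.rpow_mul hx.le, nsmul_eq_mul, mul_comm]

lemma exists_tendsto_rpow_mul_eval_rpow {R : σ → ℝ}
    (hR : LinearIndependent ℚ R) (hR1 : ∀ c, R c < -1) {p : MvPolynomial σ ℝ}
    (hp0 : coeff 0 p = 0) (hp : p ≠ 0) :
    ∃ t c : ℝ, t < -1 ∧ c ≠ 0 ∧
      Tendsto (fun x : ℝ => x ^ (-t) * eval (fun i => x ^ R i) p) atTop (𝓝 c) := by
  have hS : Injective (Finsupp.linearCombination ℕ R) := hR.restrict_scalars' ℕ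
  obtain ⟨d₀, hd₀, hmax⟩ :=
    p.support.exists_max_image (Finsupp.linearCombination ℕ R) (support_nonempty.2 hp)
  refine ⟨Finsupp.linearCombination ℕ R d₀, coeff d₀ p,
    Finsupp.linearCombination_lt_of_forall_lt (by norm_num) hR1 ?_, mem_support_iff.1 hd₀, ?_⟩
  · rintro rfl
    exact mem_support_iff.1 hd₀ hp0
  refine (tendsto_rpow_neg_mul_sum_rpow hS.injOn hd₀ hmax fun d => coeff d p).congr' ?_
  filter_upwards [eventually_gt_atTop 0] with x hx
  rw [eval_rpow p R hx]

end MvPolynomial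

noncomputable def sparseRpow (m : ℕ → ℕ) (r : ℝ) : ℕ → ℝ := extend m (fun k : ℕ => (k : ℝ) ^ r) 0

lemma sparseRpow_apply {m : ℕ → ℕ} (hm : Injective m) (r : ℝ) (k : ℕ) :
    sparseRpow m r (m k) = (k : ℝ) ^ r :=
  hm.extend_apply _ _ k

lemma sparseRpow_injective {m : ℕ → ℕ} (hm : Injective m) : Injective (sparseRpow m) := by
  intro r r' h
  have h2 := congrFun h (m 2)
  rwa [sparseRpow_apply hm, sparseRpow_apply hm, Nat.cast_ofNat,
    Real.rpow_right_inj two_pos (by norm_num)] at h2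

section sparseRpow

variable {σ : Type*} {m : ℕ → ℕ} {R : σ → ℝ} {p : MvPolynomial σ ℝ}

lemma aeval_sparseRpow (hp0 : coeff 0 p = 0) :
    aeval (fun c => sparseRpow m (R c)) p
      = extend m (fun k : ℕ => eval (fun c => (k : ℝ) ^ R c) p) 0 :=
  aeval_extend_zero (by rwa [constantCoeff_eq]) m _

lemma summable_abs_aeval_sparseRpow (hm : Injective m) (hR : LinearIndependent ℚ R)
    (hR1 : ∀ c, R c < -1) (hp0 : coeff 0 p = 0) (hp : p ≠ 0) :
    Summable fun n => |aeval (fun c => sparseRpow m (R c)) p n| := by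
  obtain ⟨t, c, ht, -, hlim⟩ := exists_tendsto_rpow_mul_eval_rpow hR hR1 hp0 hp
  rw [summable_abs_iff, aeval_sparseRpow hp0, summable_extend_zero hm]
  have hO : (fun k : ℕ => eval (fun i => (k : ℝ) ^ R i) p) =O[atTop] fun k : ℕ => (k : ℝ) ^ t := by
    have hbdd := (hlim.comp tendsto_natCast_atTop_atTop).isBigO_one ℝ
    refine (((Asymptotics.isBigO_refl (fun k : ℕ => (k : ℝ) ^ t) atTop).mul hbdd).congr' ?_ ?_)
    · filter_upwards [eventually_gt_atTop 0] with k hk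
      have hk' : (0 : ℝ) < k := by exact_mod_cast hk
      simp only [comp_apply, ← mul_assoc, ← Real.rpow_add hk', add_neg_cancel, Real.rpow_zero,
        one_mul]
    · simp
  exact summable_of_isBigO_nat' (Real.summable_nat_rpow.2 ht) hO

lemma tendsto_abs_mul_aeval_sparseRpow (hm : Injective m) (hR : LinearIndependent ℚ R)
    (hR1 : ∀ c, R c < -1) (hp0 : coeff 0 p = 0) (hp : p ≠ 0) {e : ℕ → ℝ}
    (he : Tendsto e atTop atTop) (hme : ∀ k : ℕ, (k : ℝ) ^ e k ≤ m k) :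
    Tendsto (fun k => |(m k : ℝ) * aeval (fun c => sparseRpow m (R c)) p (m k)|) atTop atTop := by
  obtain ⟨t, c, -, hc, hlim⟩ := exists_tendsto_rpow_mul_eval_rpow hR hR1 hp0 hp
  refine ((tendsto_mul_rpow_atTop_of_rpow_le he hme t).atTop_mul_pos (abs_pos.2 hc)
    (hlim.comp tendsto_natCast_atTop_atTop).abs).congr' ?_
  filter_upwards [eventually_gt_atTop 0] with k hk
  have hk' : (0 : ℝ) < k := by exact_mod_cast hk
  rw [aeval_sparseRpow hp0, hm.extend_apply, comp_apply, abs_mul, abs_mul, Nat.abs_cast,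
    abs_of_pos (Real.rpow_pos_of_pos hk' _), mul_assoc, ← mul_assoc ((k : ℝ) ^ t),
    ← Real.rpow_add hk', add_neg_cancel, Real.rpow_zero, one_mul]

end sparseRpow

theorem AOS_strongly_algebrable_general (I : Set (Set ℕ))
    (hfin : ∀ A : Set ℕ, A.Finite → A ∈ I)
    (hsub : ∀ A B : Set ℕ, A ⊆ B → B ∈ I → A ∈ I)
    (hunion : ∀ A B : Set ℕ, A ∈ I → B ∈ I → A ∪ B ∈ I)
    (e : ℕ → ℝ) (he : Tendsto e atTop atTop)
    (m : ℕ → ℕ) (hmmono : StrictMono m)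
    (hmge : ∀ k : ℕ, (k : ℝ) ^ (e k) ≤ (m k : ℝ))
    (hM : Set.range m ∉ I) :
    ∃ G : Set (ℕ → ℝ), Cardinal.mk G = Cardinal.continuum ∧
      ∀ p : MvPolynomial G ℝ,
        MvPolynomial.coeff 0 p = 0 → p ≠ 0 →
        (Summable fun n => |MvPolynomial.aeval (Subtype.val : G → ℕ → ℝ) p n|) ∧
        ¬ ∀ ε > (0 : ℝ),
          {n : ℕ | ε ≤ |(n : ℝ) * MvPolynomial.aeval (Subtype.val : G → ℕ → ℝ) p n|} ∈ I := by
  obtain ⟨ι, r, hcard, hr, hr1⟩ := exists_linearIndependent_rat_lt (-1)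
  have hm := hmmono.injective
  have hg : Injective (sparseRpow m ∘ r) := (sparseRpow_injective hm).comp hr.injective
  refine ⟨range (sparseRpow m ∘ r), by rw [mk_range_eq _ hg, hcard], fun p hp0 hp => ?_⟩
  set R := r ∘ (Equiv.ofInjective _ hg).symm
  have hval : (Subtype.val : range (sparseRpow m ∘ r) → ℕ → ℝ) = fun c => sparseRpow m (R c) :=
    funext fun c => (Equiv.apply_ofInjective_symm hg c).symm
  have hR : LinearIndependent ℚ R := hr.comp _ (Equiv.injective _)
  rw [hval]
  refine ⟨summable_abs_aeval_sparseRpow hm hR (fun _ => hr1 _) hp0 hp, fun hI => hM ?_⟩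
  exact range_mem_of_eventually_mem hfin hsub hunion (hI 1 one_pos)
    ((tendsto_abs_mul_aeval_sparseRpow hm hR (fun _ => hr1 _) hp0 hp he hmge).eventually_ge_atTop 1)

/-- Strong `𝔠`-algebrability of `AOS(I)`: if `(e k)` tends to infinity, `(m k)` is an
increasing sequence of positive integers with `m k ≥ k ^ (e k)`, and
`M = {m k : k ∈ ℕ} ∉ I`, then `AOS(I) ∪ {0}` (inside `ℓ₁` with coordinatewise
multiplication) contains a free subalgebra with continuum many free generators:
there is a set `G` of cardinality `𝔠` of sequences such that every polynomial without
constant term, nonzero, evaluated at the generators yields an element of `ℓ₁` whose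
sequence `(n * a n)` is not `I`-convergent to `0` (in particular the evaluation is
injective on such polynomials, so the generated algebra is free). -/
theorem AOS_strongly_algebrable (I : Set (Set ℕ))
    (hfin : ∀ A : Set ℕ, A.Finite → A ∈ I)
    (hsub : ∀ A B : Set ℕ, A ⊆ B → B ∈ I → A ∈ I)
    (hunion : ∀ A B : Set ℕ, A ∈ I → B ∈ I → A ∪ B ∈ I)
    (huniv : (Set.univ : Set ℕ) ∉ I)
    (e : ℕ → ℝ) (he : Tendsto e atTop atTop)
    (m : ℕ → ℕ) (hmpos : ∀ k, 0 < m k) (hmmono : StrictMono m)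
    (hmge : ∀ k : ℕ, (k : ℝ) ^ (e k) ≤ (m k : ℝ))
    (hM : Set.range m ∉ I) :
    ∃ G : Set (ℕ → ℝ), Cardinal.mk G = Cardinal.continuum ∧
      ∀ p : MvPolynomial G ℝ,
        MvPolynomial.coeff 0 p = 0 → p ≠ 0 →
        (Summable fun n => |MvPolynomial.aeval (Subtype.val : G → ℕ → ℝ) p n|) ∧
        ¬ ∀ ε > (0 : ℝ),
          {n : ℕ | ε ≤ |(n : ℝ) * MvPolynomial.aeval (Subtype.val : G → ℕ → ℝ) p n|} ∈ I :=
  AOS_strongly_algebrable_general I hfin hsub hunion e he m hmmono hmge hM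
end

section
/- Let B = {n² : n ∈ ℕ} and I = {A ⊆ ℕ : ∑_{n ∈ A∩B} 1/√n < ∞}. Then AOS(I*) = {(a_n) ∈ ℓ₁ : (n·a_n) does not I*-converge to 0} is nonempty, but for every a = (a_n) ∈ AOS(I*) the sequence (a_n³) does not belong to AOS(I*); in particular AOS(I*) contains no nonzero subalgebra of ℓ₁, hence is not 1-algebrable. -/
open Filter Set

/-- The concrete summable ideal `I = {A : ∑_{n ∈ A ∩ B} 1/√n < ∞}`, where
`B = {n² : n ∈ ℕ}`. -/
noncomputable def Bsq : Set ℕ := Set.range fun n : ℕ => n ^ 2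

def Isqrt : Set (Set ℕ) :=
  {A : Set ℕ | Summable ((A ∩ Bsq).indicator fun n : ℕ => 1 / Real.sqrt n)}

/-- `AOS(I^*)` for this ideal: `a ∈ ℓ₁` such that `(n * a n)` does not `I^*`-converge
to `0`. -/
def AOSstar (a : ℕ → ℝ) : Prop :=
  (Summable fun n => |a n|) ∧
  ¬ ∃ F : Set ℕ, Fᶜ ∈ Isqrt ∧
      ∀ ε > (0 : ℝ), ∃ k : ℕ, ∀ n ∈ F, k ≤ n → |(n : ℝ) * a n| < ε

noncomputable def aWitness : ℕ → ℝ := Bsq.indicator fun n : ℕ => 1 / (n : ℝ)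

lemma aWitness_nonneg (n : ℕ) : 0 ≤ aWitness n := by
  apply Set.indicator_nonneg
  intro x _
  positivity

lemma aWitness_sq (k : ℕ) : aWitness (k ^ 2) = 1 / (k : ℝ) ^ 2 := by
  have : (k ^ 2 : ℕ) ∈ Bsq := ⟨k, rfl⟩
  simp [aWitness, Set.indicator_of_mem this]

lemma sq_injective : Function.Injective fun n : ℕ => n ^ 2 := by
  intro a b h
  exact Nat.pow_left_injective (by norm_num) h

lemma aWitness_summable : Summable fun n => |aWitness n| := by
  have h0 : ∀ n, |aWitness n| = aWitness n := fun n => abs_of_nonneg (aWitness_nonneg n)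
  simp only [h0]
  rw [← Function.Injective.summable_iff sq_injective (fun x hx => by
    simp only [aWitness]
    exact Set.indicator_of_notMem (by simpa [Bsq] using hx) _)]
  have : ((fun n => aWitness n) ∘ fun n : ℕ => n ^ 2) = fun k : ℕ => 1 / (k : ℝ) ^ 2 := by
    funext k; exact aWitness_sq k
  rw [this]
  exact Real.summable_one_div_nat_pow.mpr one_lt_two

/-- For `B = {n² : n ∈ ℕ}` and `I = {A : ∑_{n ∈ A ∩ B} 1/√n < ∞}`, the set `AOS(I^*)`
is nonempty, but the cube of any of its elements leaves it; hence `AOS(I^*)` contains no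
nonzero subalgebra of `ℓ₁` and is not `1`-algebrable. -/
theorem AOSstar_nonempty_not_algebrable :
    (∃ a : ℕ → ℝ, AOSstar a) ∧
    (∀ a : ℕ → ℝ, AOSstar a → ¬ AOSstar (fun n => a n ^ 3)) := by
  constructor
  · refine ⟨aWitness, aWitness_summable, ?_⟩
    rintro ⟨F, hF, hconv⟩
    obtain ⟨k, hk⟩ := hconv (1/2) (by norm_num)
    set K := max k 1 with hK
    -- every square j^2 with j ≥ K lies outside F
    have hsq : ∀ j : ℕ, K ≤ j → (j ^ 2 : ℕ) ∈ Fᶜ ∩ Bsq := by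
      intro j hj
      have hj1 : 1 ≤ j := le_trans (le_max_right _ _) hj
      have hjk : k ≤ j ^ 2 := le_trans (le_max_left _ _) (le_trans hj (Nat.le_self_pow two_ne_zero j))
      refine ⟨fun hmem => ?_, ⟨j, rfl⟩⟩
      have := hk _ hmem hjk
      have hval : ((j ^ 2 : ℕ) : ℝ) * aWitness (j ^ 2) = 1 := by
        rw [aWitness_sq]
        have : ((j : ℝ) ^ 2) ≠ 0 := by positivity
        push_cast
        field_simp
      rw [hval] at this
      norm_num at this
    -- hence the indicator dominates 1/j on squares, contradicting summability
    set g : ℕ → ℝ := (Fᶜ ∩ Bsq).indicator fun n : ℕ => 1 / Real.sqrt n with hg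
    have hF' : Summable g := hF
    have h1 : Summable fun j : ℕ => g (j ^ 2) := hF'.comp_injective sq_injective
    have h2 : Summable fun j : ℕ => g ((j + K) ^ 2) :=
      (summable_nat_add_iff (f := fun j : ℕ => g (j ^ 2)) K).mpr h1
    have heq : ∀ j : ℕ, g ((j + K) ^ 2) = (fun n : ℕ => 1 / (n : ℝ)) (j + K) := by
      intro j
      have hmem := hsq (j + K) (Nat.le_add_left _ _)
      rw [hg, Set.indicator_of_mem hmem]
      have : Real.sqrt (((j + K) ^ 2 : ℕ) : ℝ) = (((j + K : ℕ) : ℝ)) := by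
        push_cast
        exact Real.sqrt_sq (by positivity)
      rw [this]
    have h3 : Summable fun j : ℕ => (fun n : ℕ => 1 / (n : ℝ)) (j + K) := h2.congr heq
    exact Real.not_summable_one_div_natCast
      ((summable_nat_add_iff (f := fun n : ℕ => 1 / (n : ℝ)) K).mp h3)
  · rintro a ⟨hsum, _⟩ ⟨hsum3, hnc⟩
    apply hnc
    refine ⟨{n : ℕ | |a n| ≤ 1 / Real.sqrt n}, ?_, ?_⟩
    · -- the complement is in the ideal: on it 1/√n < |a n|
      show Summable (({n : ℕ | |a n| ≤ 1 / Real.sqrt n}ᶜ ∩ Bsq).indicator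
        fun n : ℕ => 1 / Real.sqrt n)
      refine Summable.of_nonneg_of_le ?_ ?_ hsum
      · intro n
        exact Set.indicator_nonneg
          (fun x _ => div_nonneg zero_le_one (Real.sqrt_nonneg _)) n
      intro n
      by_cases hn : n ∈ ({n : ℕ | |a n| ≤ 1 / Real.sqrt n}ᶜ ∩ Bsq)
      · rw [Set.indicator_of_mem hn]
        have : ¬ (|a n| ≤ 1 / Real.sqrt n) := hn.1
        linarith [not_le.mp this]
      · rw [Set.indicator_of_notMem hn]; exact abs_nonneg _
    · -- on F, n * a n ^ 3 is bounded by 1/√n → 0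
      intro ε hε
      obtain ⟨k, hk1, hk2⟩ : ∃ k : ℕ, 1 ≤ k ∧ ε⁻¹ ^ 2 < (k : ℝ) := by
        obtain ⟨k, hk⟩ := exists_nat_gt (max 1 (ε⁻¹ ^ 2))
        exact ⟨k, by exact_mod_cast le_of_lt (lt_of_le_of_lt (le_max_left _ _) hk),
          lt_of_le_of_lt (le_max_right _ _) hk⟩
      refine ⟨k, fun n hn hkn => ?_⟩
      have hn1 : (1 : ℕ) ≤ n := le_trans hk1 hkn
      have hnpos : (0 : ℝ) < n := by exact_mod_cast hn1
      have hs : (0 : ℝ) < Real.sqrt n := Real.sqrt_pos.mpr hnpos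
      have hna : |a n| ≤ 1 / Real.sqrt n := hn
      have key : |(n : ℝ) * a n ^ 3| ≤ 1 / Real.sqrt n := by
        rw [abs_mul, abs_pow, Nat.abs_cast]
        have h1 : |a n| ^ 3 ≤ (1 / Real.sqrt n) ^ 3 :=
          pow_le_pow_left₀ (abs_nonneg _) hna 3
        have h2 : (n : ℝ) * (1 / Real.sqrt n) ^ 3 = 1 / Real.sqrt n := by
          have hsq : Real.sqrt n ^ 2 = (n : ℝ) := Real.sq_sqrt hnpos.le
          field_simp
          nlinarith [hsq]
        calc (n : ℝ) * |a n| ^ 3 ≤ (n : ℝ) * (1 / Real.sqrt n) ^ 3 := by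
              exact mul_le_mul_of_nonneg_left h1 hnpos.le
          _ = 1 / Real.sqrt n := h2
      have hlt : 1 / Real.sqrt n < ε := by
        have hkpos : (0 : ℝ) < k := by positivity
        have hsk : ε⁻¹ < Real.sqrt k := by
          have := Real.sqrt_lt_sqrt (by positivity) hk2
          rwa [Real.sqrt_sq (by positivity)] at this
        have hsk' : Real.sqrt k ≤ Real.sqrt n := Real.sqrt_le_sqrt (by exact_mod_cast hkn)
        have hεinv : (0 : ℝ) < ε⁻¹ := by positivity
        calc 1 / Real.sqrt n ≤ 1 / Real.sqrt k := by
              apply one_div_le_one_div_of_le (lt_of_le_of_lt hεinv.le hsk) hsk'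
          _ < 1 / ε⁻¹ := by apply one_div_lt_one_div_of_lt hεinv hsk
          _ = ε := by field_simp
      exact lt_of_le_of_lt key hlt
end
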